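/- arXiv:math/0012153 — 2 statements merged into one kernel-verified Lean document; each statement's English description precedes it below -/
import Mathlib

section
/- Let K be a two-dimensional local field with rank-1 valuation ring 𝒪 and rank-2 valuation ring O, and let t₂ be a uniformizer of K. Every fractional O-ideal J ⊆ K that is not finitely generated as an O-module is equal to t₂^j 𝒪 (regarded as an O-submodule of K) for a unique j ∈ ℤ. Moreover, the set of all fractional O-ideals of K is totally ordered by inclusion. -/
noncomputable section
open IsLocalRing

variable {K : Type*} [Field K] (𝒪 : ValuationSubring K)
variable (𝒪₁ : ValuationSubring (ResidueField 𝒪))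

def ringO : Subring K :=
  (𝒪₁.toSubring.comap (residue 𝒪)).map 𝒪.subtype

lemma ringO_le : (ringO 𝒪 𝒪₁ : Set K) ⊆ (𝒪 : Set K) := by
  rintro x ⟨y, -, rfl⟩
  exact y.2

def setM : Set K :=
  {x : K | ∃ y : 𝒪, residue 𝒪 y ∈ 𝒪₁.nonunits ∧ (y : K) = x}

def idealM : Ideal (ringO 𝒪 𝒪₁) where
  carrier := {x | (x : K) ∈ setM 𝒪 𝒪₁}
  add_mem' := by
    rintro a b ⟨ya, ha, hya⟩ ⟨yb, hb, hyb⟩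
    refine ⟨ya + yb, ?_, by push_cast [hya, hyb]; rfl⟩
    rw [ValuationSubring.mem_nonunits_iff] at *
    rw [map_add]
    exact lt_of_le_of_lt (Valuation.map_add _ _ _) (max_lt ha hb)
  zero_mem' := by
    refine ⟨0, ?_, by push_cast; rfl⟩
    rw [ValuationSubring.mem_nonunits_iff, map_zero, Valuation.map_zero]
    exact zero_lt_one
  smul_mem' := by
    rintro c x ⟨yx, hx, hyx⟩
    obtain ⟨yc, hc, hyc⟩ := c.2
    refine ⟨yc * yx, ?_, ?_⟩
    · rw [ValuationSubring.mem_nonunits_iff] at *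
      rw [map_mul, Valuation.map_mul]
      calc 𝒪₁.valuation (residue 𝒪 yc) * 𝒪₁.valuation (residue 𝒪 yx)
          ≤ 1 * 𝒪₁.valuation (residue 𝒪 yx) :=
            mul_le_mul_left ((𝒪₁.valuation_le_one_iff _).mpr hc) _
        _ = 𝒪₁.valuation (residue 𝒪 yx) := one_mul _
        _ < 1 := hx
    · have hyc' : (yc : K) = (c : K) := hyc
      show ((yc : K) * (yx : K) = ((c • x : ringO 𝒪 𝒪₁) : K))
      rw [hyc', hyx]
      rfl

/-- A fractional `O`-ideal: a nonzero `O`-submodule `J ⊆ K` with `aJ ⊆ O` for some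
`a ∈ K^×`. -/
def IsFracIdealO (J : Submodule (ringO 𝒪 𝒪₁) K) : Prop :=
  J ≠ ⊥ ∧ ∃ a : K, a ≠ 0 ∧ ∀ x ∈ J, a * x ∈ ringO 𝒪 𝒪₁

/-- The rank-1 valuation ring `𝒪` of `K`, viewed as an `O`-submodule of `K`. -/
def OcalSub : Submodule (ringO 𝒪 𝒪₁) K where
  carrier := (𝒪 : Set K)
  add_mem' hx hy := add_mem hx hy
  zero_mem' := zero_mem 𝒪
  smul_mem' c x hx := by
    show (c : K) * x ∈ 𝒪
    exact mul_mem (ringO_le 𝒪 𝒪₁ c.2) hx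

/-- Multiplication by `a : K` as an `O`-linear endomorphism of `K`. -/
def mulK (a : K) : K →ₗ[ringO 𝒪 𝒪₁] K where
  toFun x := a * x
  map_add' := mul_add a
  map_smul' c x := by
    show a * ((c : K) * x) = (c : K) * (a * x)
    ring

section Aux
variable {𝒪 𝒪₁}

lemma mem_ringO (y : 𝒪) (h : residue 𝒪 y ∈ 𝒪₁) : (y : K) ∈ ringO 𝒪 𝒪₁ :=
  ⟨y, h, rfl⟩

lemma unit_inv_coe (u : 𝒪ˣ) : ((↑u⁻¹ : 𝒪) : K) = ((u : 𝒪) : K)⁻¹ :=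
  eq_inv_of_mul_eq_one_right (congrArg Subtype.val u.mul_inv)

lemma unit_coe_ne_zero (u : 𝒪ˣ) : ((u : 𝒪) : K) ≠ 0 :=
  fun h => u.ne_zero (Subtype.ext h)

lemma ringO_step {x : K} (h : x ∈ 𝒪) : x ∈ ringO 𝒪 𝒪₁ ∨ x⁻¹ ∈ ringO 𝒪 𝒪₁ := by
  by_cases h1 : residue 𝒪 ⟨x, h⟩ ∈ 𝒪₁
  · exact Or.inl (mem_ringO ⟨x, h⟩ h1)
  right
  have hne : residue 𝒪 ⟨x, h⟩ ≠ 0 := fun h0 => h1 (h0 ▸ zero_mem 𝒪₁.toSubring)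
  have hu : IsUnit (⟨x, h⟩ : 𝒪) := by
    by_contra hu; exact hne ((residue_eq_zero_iff _).mpr hu)
  obtain ⟨u, hu⟩ := hu
  have hmul : (⟨x, h⟩ : 𝒪) * ↑u⁻¹ = 1 := by rw [← hu]; exact u.mul_inv
  have hmulK : x * ((↑u⁻¹ : 𝒪) : K) = 1 := congrArg Subtype.val hmul
  have hinv : ((↑u⁻¹ : 𝒪) : K) = x⁻¹ := eq_inv_of_mul_eq_one_right hmulK
  have hxi : x⁻¹ ∈ 𝒪 := hinv ▸ (↑u⁻¹ : 𝒪).2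
  have heq : (⟨x⁻¹, hxi⟩ : 𝒪) = ↑u⁻¹ := Subtype.ext hinv.symm
  refine mem_ringO ⟨x⁻¹, hxi⟩ ?_
  have h2 : residue 𝒪 ⟨x, h⟩ * residue 𝒪 ⟨x⁻¹, hxi⟩ = 1 := by
    rw [heq, ← map_mul, hmul, map_one]
  have h3 : residue 𝒪 ⟨x⁻¹, hxi⟩ = (residue 𝒪 ⟨x, h⟩)⁻¹ :=
    eq_inv_of_mul_eq_one_left (by rw [mul_comm]; exact h2)
  rw [h3]
  exact (𝒪₁.mem_or_inv_mem (residue 𝒪 ⟨x, h⟩)).resolve_left h1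

lemma ringO_valuation (x : K) : x ∈ ringO 𝒪 𝒪₁ ∨ x⁻¹ ∈ ringO 𝒪 𝒪₁ := by
  rcases 𝒪.mem_or_inv_mem x with h | h
  · exact ringO_step h
  · rcases ringO_step (𝒪₁ := 𝒪₁) h with h' | h'
    · exact Or.inr h'
    · exact Or.inl (by rwa [inv_inv] at h')

lemma zpow_mem_iff {t : K} (ht : t ∈ 𝒪) (hirr : Irreducible (⟨t, ht⟩ : 𝒪)) (n : ℤ) :
    t ^ n ∈ 𝒪 ↔ 0 ≤ n := by
  have ht0 : t ≠ 0 := fun h => hirr.ne_zero (Subtype.ext h)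
  constructor
  · intro hn
    by_contra hneg
    push_neg at hneg
    have h1 : t⁻¹ ∈ 𝒪 := by
      have : t⁻¹ = t ^ n * t ^ ((-1 - n).toNat) := by
        rw [← zpow_natCast, Int.toNat_of_nonneg (by omega), ← zpow_add₀ ht0]
        norm_num
      rw [this]
      exact mul_mem hn (pow_mem ht _)
    have : (⟨t, ht⟩ : 𝒪) * ⟨t⁻¹, h1⟩ = 1 := Subtype.ext (mul_inv_cancel₀ ht0)
    exact hirr.not_isUnit (isUnit_iff_exists_inv.mpr ⟨_, this⟩)
  · intro hn
    lift n to ℕ using hn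
    rw [zpow_natCast]
    exact pow_mem ht n

lemma exists_unit_zpow {t : K} (ht : t ∈ 𝒪) (hirr : Irreducible (⟨t, ht⟩ : 𝒪))
    [IsDiscreteValuationRing 𝒪] {x : K} (hx : x ≠ 0) :
    ∃ (n : ℤ) (u : 𝒪ˣ), x = (u : 𝒪) * t ^ n := by
  have ht0 : t ≠ 0 := fun h => hirr.ne_zero (Subtype.ext h)
  have main : ∀ y : K, y ≠ 0 → y ∈ 𝒪 → ∃ (n : ℤ) (u : 𝒪ˣ), y = (u : 𝒪) * t ^ n := by
    intro y hy0 hy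
    obtain ⟨n, u, hu⟩ := IsDiscreteValuationRing.eq_unit_mul_pow_irreducible
      (x := (⟨y, hy⟩ : 𝒪)) (fun h => hy0 (congrArg Subtype.val h)) hirr
    refine ⟨n, u, ?_⟩
    have := congrArg Subtype.val hu
    push_cast at this
    rw [this, zpow_natCast]
  rcases 𝒪.mem_or_inv_mem x with h | h
  · exact main x hx h
  · obtain ⟨n, u, hu⟩ := main x⁻¹ (inv_ne_zero hx) h
    refine ⟨-n, u⁻¹, ?_⟩
    rw [unit_inv_coe, zpow_neg, ← mul_inv, ← hu, inv_inv]

set_option maxHeartbeats 1000000 in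
lemma part1 [IsDiscreteValuationRing 𝒪] [IsDiscreteValuationRing 𝒪₁]
    {t₂ : K} (ht₂ : t₂ ∈ 𝒪) (ht₂irr : Irreducible (⟨t₂, ht₂⟩ : 𝒪))
    (J : Submodule (ringO 𝒪 𝒪₁) K) (hJ : IsFracIdealO 𝒪 𝒪₁ J) (hfg : ¬ J.FG) :
    ∃! j : ℤ, J = (OcalSub 𝒪 𝒪₁).map (mulK 𝒪 𝒪₁ (t₂ ^ j)) := by
  have ht0 : t₂ ≠ 0 := fun h => ht₂irr.ne_zero (Subtype.ext h)
  obtain ⟨hJbot, a, ha0, haJ⟩ := hJ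
  obtain ⟨m, ua, hma⟩ := exists_unit_zpow ht₂ ht₂irr ha0
  -- the set of exponents occurring in J is nonempty and bounded below
  have hbdd : ∀ n : ℤ, (∃ u : 𝒪ˣ, ((u : 𝒪) : K) * t₂ ^ n ∈ J) → -m ≤ n := by
    rintro n ⟨u, hu⟩
    have hmem : a * (((u : 𝒪) : K) * t₂ ^ n) ∈ 𝒪 := ringO_le 𝒪 𝒪₁ (haJ _ hu)
    have key : t₂ ^ (m + n) =
        ((ua : 𝒪) : K)⁻¹ * (((u : 𝒪) : K)⁻¹ * (a * (((u : 𝒪) : K) * t₂ ^ n))) := by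
      rw [hma, zpow_add₀ ht0]
      field_simp
    have : t₂ ^ (m + n) ∈ 𝒪 := by
      rw [key]
      exact mul_mem (unit_inv_coe ua ▸ (↑ua⁻¹ : 𝒪).2)
        (mul_mem (unit_inv_coe u ▸ (↑u⁻¹ : 𝒪).2) hmem)
    have := (zpow_mem_iff ht₂ ht₂irr _).mp this
    omega
  have hne : ∃ n : ℤ, ∃ u : 𝒪ˣ, ((u : 𝒪) : K) * t₂ ^ n ∈ J := by
    obtain ⟨x, hxJ, hx0⟩ := Submodule.exists_mem_ne_zero_of_ne_bot hJbot
    obtain ⟨n, u, rfl⟩ := exists_unit_zpow ht₂ ht₂irr hx0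
    exact ⟨n, u, hxJ⟩
  obtain ⟨j, ⟨u₀, hy₀⟩, hmin⟩ := Int.exists_least_of_bdd ⟨-m, hbdd⟩ hne
  -- Claim A
  have hA : ∀ x ∈ J, t₂ ^ (-j) * x ∈ 𝒪 := by
    intro x hx
    by_cases hx0 : x = 0
    · simpa [hx0] using zero_mem 𝒪
    obtain ⟨n, u, rfl⟩ := exists_unit_zpow ht₂ ht₂irr hx0
    have hn : j ≤ n := hmin n ⟨u, hx⟩
    have : t₂ ^ (-j) * (((u : 𝒪) : K) * t₂ ^ n) = ((u : 𝒪) : K) * t₂ ^ (n - j) := by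
      rw [sub_eq_add_neg, zpow_add₀ ht0]; ring
    rw [this]
    exact mul_mem ((u : 𝒪)).2 ((zpow_mem_iff ht₂ ht₂irr _).mpr (by omega))
  -- Claim B
  have hspan : maximalIdeal 𝒪 = Ideal.span {(⟨t₂, ht₂⟩ : 𝒪)} :=
    (IsDiscreteValuationRing.irreducible_iff_uniformizer _).mp ht₂irr
  have hB : ∀ x : K, x ∈ 𝒪 → t₂ ^ j * (t₂ * x) ∈ J := by
    intro x hx
    set U₀ : K := ((u₀ : 𝒪) : K) with hU₀
    have hU₀0 : U₀ ≠ 0 := unit_coe_ne_zero u₀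
    have hc𝒪 : t₂ * x * U₀⁻¹ ∈ 𝒪 :=
      mul_mem (mul_mem ht₂ hx) (unit_inv_coe u₀ ▸ (↑u₀⁻¹ : 𝒪).2)
    have hres : residue 𝒪 ⟨t₂ * x * U₀⁻¹, hc𝒪⟩ = 0 := by
      rw [residue_eq_zero_iff, hspan, Ideal.mem_span_singleton]
      refine ⟨⟨x * U₀⁻¹, mul_mem hx (unit_inv_coe u₀ ▸ (↑u₀⁻¹ : 𝒪).2)⟩, Subtype.ext ?_⟩
      show t₂ * x * U₀⁻¹ = t₂ * (x * U₀⁻¹)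
      ring
    have hcO : (t₂ * x * U₀⁻¹ : K) ∈ ringO 𝒪 𝒪₁ :=
      mem_ringO ⟨_, hc𝒪⟩ (hres ▸ zero_mem 𝒪₁.toSubring)
    have := J.smul_mem ⟨_, hcO⟩ hy₀
    have heq : (t₂ * x * U₀⁻¹) * (U₀ * t₂ ^ j) = t₂ ^ j * (t₂ * x) := by
      field_simp
    show t₂ ^ j * (t₂ * x) ∈ J
    rwa [← heq]
  -- the smul helper
  have hsmul : ∀ (γ : ResidueField 𝒪), γ ∈ 𝒪₁ → ∀ (x : K) (hx : x ∈ J),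
      ∃ (x' : K) (hx' : x' ∈ J),
        residue 𝒪 ⟨t₂ ^ (-j) * x', hA x' hx'⟩ = γ * residue 𝒪 ⟨t₂ ^ (-j) * x, hA x hx⟩ := by
    intro γ hγ x hx
    obtain ⟨c, hc⟩ := Ideal.Quotient.mk_surjective (I := maximalIdeal 𝒪) γ
    have hcO : ((c : K)) ∈ ringO 𝒪 𝒪₁ := mem_ringO c (by rw [show residue 𝒪 c = γ from hc]; exact hγ)
    refine ⟨(c : K) * x, J.smul_mem ⟨_, hcO⟩ hx, ?_⟩
    have h1 : (⟨t₂ ^ (-j) * ((c : K) * x), hA _ (J.smul_mem ⟨_, hcO⟩ hx)⟩ : 𝒪)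
        = c * ⟨t₂ ^ (-j) * x, hA x hx⟩ := Subtype.ext (by show _ = (c:K) * _; ring)
    rw [h1, map_mul, show residue 𝒪 c = γ from hc]
  by_cases hcase : ∀ x : K, x ∈ 𝒪 → t₂ ^ j * x ∈ J
  · -- J = t₂^j 𝒪
    have hJeq : J = (OcalSub 𝒪 𝒪₁).map (mulK 𝒪 𝒪₁ (t₂ ^ j)) := by
      apply le_antisymm
      · intro x hx
        refine Submodule.mem_map.mpr ⟨t₂ ^ (-j) * x, hA x hx, ?_⟩
        show t₂ ^ j * (t₂ ^ (-j) * x) = x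
        rw [← mul_assoc, ← zpow_add₀ ht0]
        simp
      · rintro x ⟨w, hw, rfl⟩
        exact hcase w hw
    have hle : ∀ m' n' : ℤ, (OcalSub 𝒪 𝒪₁).map (mulK 𝒪 𝒪₁ (t₂ ^ m'))
        ≤ (OcalSub 𝒪 𝒪₁).map (mulK 𝒪 𝒪₁ (t₂ ^ n')) → n' ≤ m' := by
      intro m' n' h
      have h1 : t₂ ^ m' ∈ (OcalSub 𝒪 𝒪₁).map (mulK 𝒪 𝒪₁ (t₂ ^ m')) :=
        Submodule.mem_map.mpr ⟨1, one_mem 𝒪, mul_one _⟩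
      obtain ⟨w, hw, hwe⟩ := Submodule.mem_map.mp (h h1)
      have hwe' : t₂ ^ n' * w = t₂ ^ m' := hwe
      have : t₂ ^ (m' - n') ∈ 𝒪 := by
        have hw' : t₂ ^ (m' - n') = w := by
          rw [sub_eq_add_neg, zpow_add₀ ht0, ← hwe', zpow_neg, mul_comm (t₂ ^ n') w,
            mul_assoc, mul_inv_cancel₀ (zpow_ne_zero _ ht0), mul_one]
        rwa [hw']
      have := (zpow_mem_iff ht₂ ht₂irr _).mp this
      omega
    refine ⟨j, hJeq, fun k hk => ?_⟩
    have h1 := hle j k (by rw [← hJeq, ← hk])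
    have h2 := hle k j (by rw [← hJeq, ← hk])
    omega
  · -- otherwise J is principal, contradicting hfg
    exfalso
    push_neg at hcase
    obtain ⟨x₀, hx₀𝒪, hx₀J⟩ := hcase
    set z : ResidueField 𝒪 := residue 𝒪 ⟨x₀, hx₀𝒪⟩ with hzdef
    have hz0 : z ≠ 0 := by
      intro h0
      rw [hzdef, residue_eq_zero_iff, hspan, Ideal.mem_span_singleton] at h0
      obtain ⟨e, he⟩ := h0
      have heK : x₀ = t₂ * (e : K) := congrArg Subtype.val he
      exact hx₀J (heK ▸ hB (e : K) e.2)
    have hzN : ∀ (x : K) (hx : x ∈ J), residue 𝒪 ⟨t₂ ^ (-j) * x, hA x hx⟩ ≠ z := by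
      intro x hx hcontra
      have hd : (⟨x₀, hx₀𝒪⟩ - ⟨t₂ ^ (-j) * x, hA x hx⟩ : 𝒪) ∈ maximalIdeal 𝒪 := by
        rw [← residue_eq_zero_iff, map_sub, hcontra, hzdef, sub_self]
      rw [hspan, Ideal.mem_span_singleton] at hd
      obtain ⟨e, he⟩ := hd
      have heK : x₀ - t₂ ^ (-j) * x = t₂ * (e : K) := congrArg Subtype.val he
      have hkey : t₂ ^ j * x₀ = x + t₂ ^ j * (t₂ * (e : K)) := by
        have hx₀e : x₀ = t₂ ^ (-j) * x + t₂ * (e : K) := by rw [← heK]; ring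
        rw [hx₀e, mul_add, ← mul_assoc, ← zpow_add₀ ht0]
        simp
      exact hx₀J (hkey ▸ J.add_mem hx (hB (e : K) e.2))
    have hNz : ∀ (x : K) (hx : x ∈ J), ∃ β : 𝒪₁,
        residue 𝒪 ⟨t₂ ^ (-j) * x, hA x hx⟩ = z * β := by
      intro x hx
      set ξ := residue 𝒪 ⟨t₂ ^ (-j) * x, hA x hx⟩ with hξdef
      by_cases hξ0 : ξ = 0
      · exact ⟨0, by rw [hξ0]; simp⟩
      rcases 𝒪₁.mem_or_inv_mem (ξ * z⁻¹) with h | h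
      · refine ⟨⟨ξ * z⁻¹, h⟩, ?_⟩
        show ξ = z * (ξ * z⁻¹)
        field_simp
      · exfalso
        have h' : z * ξ⁻¹ ∈ 𝒪₁ := by rwa [mul_inv, inv_inv, mul_comm] at h
        obtain ⟨x', hx', hres⟩ := hsmul (z * ξ⁻¹) h' x hx
        refine hzN x' hx' ?_
        rw [hres, ← hξdef]
        field_simp
    set I : Ideal 𝒪₁ :=
      { carrier := {β | ∃ (x : K) (hx : x ∈ J),
          residue 𝒪 ⟨t₂ ^ (-j) * x, hA x hx⟩ = z * β}
        zero_mem' := ⟨0, J.zero_mem, by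
          rw [show (⟨t₂ ^ (-j) * (0 : K), hA 0 J.zero_mem⟩ : 𝒪) = 0 from
            Subtype.ext (mul_zero _)]
          simp⟩
        add_mem' := by
          rintro β β' ⟨x, hx, hβ⟩ ⟨x', hx', hβ'⟩
          refine ⟨x + x', J.add_mem hx hx', ?_⟩
          rw [show (⟨t₂ ^ (-j) * (x + x'), hA _ (J.add_mem hx hx')⟩ : 𝒪)
              = ⟨t₂ ^ (-j) * x, hA x hx⟩ + ⟨t₂ ^ (-j) * x', hA x' hx'⟩ from
            Subtype.ext (mul_add _ _ _), map_add, hβ, hβ']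
          push_cast
          ring
        smul_mem' := by
          rintro γ β ⟨x, hx, hβ⟩
          obtain ⟨x', hx', hres⟩ := hsmul (γ : ResidueField 𝒪) γ.2 x hx
          refine ⟨x', hx', ?_⟩
          rw [hres, hβ, smul_eq_mul]
          push_cast
          ring } with hIdef
    have hI0 : I ≠ ⊥ := by
      have hy₀' : ((u₀ : 𝒪) : K) * t₂ ^ j ∈ J := hy₀
      obtain ⟨β, hβ⟩ := hNz _ hy₀'
      have hξ₀ : residue 𝒪 ⟨t₂ ^ (-j) * (((u₀ : 𝒪) : K) * t₂ ^ j), hA _ hy₀'⟩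
          = residue 𝒪 (u₀ : 𝒪) := by
        congr 1
        refine Subtype.ext ?_
        show t₂ ^ (-j) * (((u₀ : 𝒪) : K) * t₂ ^ j) = ((u₀ : 𝒪) : K)
        rw [mul_comm (((u₀ : 𝒪) : K)), ← mul_assoc, ← zpow_add₀ ht0]
        simp
      have hune : residue 𝒪 (u₀ : 𝒪) ≠ 0 := fun h =>
        (IsLocalRing.mem_maximalIdeal _).mp ((residue_eq_zero_iff _).mp h) u₀.isUnit
      intro hbot
      have hβI : β ∈ I := ⟨_, hy₀', hβ⟩
      rw [hbot, Ideal.mem_bot] at hβI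
      apply hune
      rw [← hξ₀, hβ, hβI]
      simp
    obtain ⟨β₀, hβ₀span⟩ := (IsPrincipalIdealRing.principal I).principal
    have hβ₀mem : β₀ ∈ I := hβ₀span ▸ Ideal.subset_span rfl
    obtain ⟨y, hyJ, hyres⟩ := hβ₀mem
    have hβ₀0 : β₀ ≠ 0 := by
      rintro rfl
      apply hI0
      rw [hβ₀span]
      simp
    have hζ0 : z * (β₀ : ResidueField 𝒪) ≠ 0 :=
      mul_ne_zero hz0 (fun h => hβ₀0 (Subtype.ext h))
    set w : 𝒪 := ⟨t₂ ^ (-j) * y, hA y hyJ⟩ with hwdef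
    have hwres : residue 𝒪 w = z * β₀ := hyres
    have hwu : IsUnit w := by
      by_contra hwu
      exact hζ0 (hwres ▸ (residue_eq_zero_iff w).mpr hwu)
    obtain ⟨wu, hwueq⟩ := hwu
    have hy0 : y ≠ 0 := by
      rintro rfl
      apply hζ0
      rw [← hwres, hwdef]
      rw [show (⟨t₂ ^ (-j) * (0 : K), hA 0 hyJ⟩ : 𝒪) = 0 from Subtype.ext (mul_zero _)]
      simp
    apply hfg
    refine ⟨{y}, ?_⟩
    rw [Finset.coe_singleton]
    apply le_antisymm
    · rw [Submodule.span_le, Set.singleton_subset_iff]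
      exact hyJ
    · intro x hx
      obtain ⟨β, hβ⟩ := hNz x hx
      have hβI : β ∈ I := ⟨x, hx, hβ⟩
      rw [hβ₀span] at hβI
      obtain ⟨γ, hγ⟩ := Submodule.mem_span_singleton.mp hβI
      have hγ' : β = γ * β₀ := by rw [← hγ, smul_eq_mul]
      -- the coefficient
      have hwinvres : residue 𝒪 ((↑wu⁻¹ : 𝒪)) = (z * β₀)⁻¹ := by
        refine eq_inv_of_mul_eq_one_left ?_
        rw [← hwres, ← hwueq, ← map_mul, wu.inv_mul, map_one]
      set c : 𝒪 := ⟨t₂ ^ (-j) * x, hA x hx⟩ * (↑wu⁻¹ : 𝒪) with hcdef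
      have hcres : residue 𝒪 c = (γ : ResidueField 𝒪) := by
        rw [hcdef, map_mul, hβ, hwinvres, hγ']
        push_cast
        field_simp
        simp [show (β₀ : ResidueField 𝒪) ≠ 0 from fun h => hβ₀0 (Subtype.ext h)]
      have hcO : ((c : K)) ∈ ringO 𝒪 𝒪₁ := mem_ringO c (by rw [hcres]; exact γ.2)
      rw [Submodule.mem_span_singleton]
      refine ⟨⟨(c : K), hcO⟩, ?_⟩
      show (c : K) * y = x
      have hwuK : ((↑wu⁻¹ : 𝒪) : K) = (t₂ ^ (-j) * y)⁻¹ := by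
        rw [unit_inv_coe]
        congr 1
        exact congrArg Subtype.val hwueq
      have hcK : (c : K) = (t₂ ^ (-j) * x) * (t₂ ^ (-j) * y)⁻¹ := by
        rw [hcdef]
        push_cast
        rw [hwuK]
      rw [hcK]
      have htj : (t₂ ^ (-j) : K) ≠ 0 := zpow_ne_zero _ ht0
      calc t₂ ^ (-j) * x * (t₂ ^ (-j) * y)⁻¹ * y
          = x * (t₂ ^ (-j) * (t₂ ^ (-j))⁻¹) * (y⁻¹ * y) := by
            rw [mul_inv]; ring
        _ = x := by rw [mul_inv_cancel₀ htj, inv_mul_cancel₀ hy0, mul_one, mul_one]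
lemma totally_ordered (J J' : Submodule (ringO 𝒪 𝒪₁) K) : J ≤ J' ∨ J' ≤ J := by
  by_cases h : J ≤ J'
  · exact Or.inl h
  right
  rw [SetLike.not_le_iff_exists] at h
  obtain ⟨x, hxJ, hxJ'⟩ := h
  intro y hy
  by_cases hy0 : y = 0
  · simpa [hy0] using J.zero_mem
  have hx0 : x ≠ 0 := fun h0 => hxJ' (h0 ▸ J'.zero_mem)
  rcases ringO_valuation (𝒪 := 𝒪) (𝒪₁ := 𝒪₁) (x * y⁻¹) with hc | hc
  · exfalso
    apply hxJ'
    have h2 : (x * y⁻¹) * y ∈ J' := J'.smul_mem ⟨x * y⁻¹, hc⟩ hy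
    have he : (x * y⁻¹) * y = x := by field_simp
    rwa [he] at h2
  · have hinv : (x * y⁻¹)⁻¹ = y * x⁻¹ := by rw [mul_inv, inv_inv, mul_comm]
    rw [hinv] at hc
    have h2 : (y * x⁻¹) * x ∈ J := J.smul_mem ⟨y * x⁻¹, hc⟩ hxJ
    have he : (y * x⁻¹) * x = y := by field_simp
    rwa [he] at h2

end Aux

/-- Every fractional `O`-ideal of the two-dimensional local field `K` which is not finitely
generated equals `t₂^j 𝒪` for a unique `j ∈ ℤ`; moreover the set of all fractional
`O`-ideals is totally ordered by inclusion. -/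
theorem non_fg_fractional_ideal_eq_and_totally_ordered
    [IsDiscreteValuationRing 𝒪] [IsAdicComplete (maximalIdeal 𝒪) 𝒪]
    [IsDiscreteValuationRing 𝒪₁] [IsAdicComplete (maximalIdeal 𝒪₁) 𝒪₁]
    (t₂ : K) (ht₂ : t₂ ∈ 𝒪) (ht₂irr : Irreducible (⟨t₂, ht₂⟩ : 𝒪)) :
    (∀ J : Submodule (ringO 𝒪 𝒪₁) K, IsFracIdealO 𝒪 𝒪₁ J → ¬ J.FG →
      ∃! j : ℤ, J = (OcalSub 𝒪 𝒪₁).map (mulK 𝒪 𝒪₁ (t₂ ^ j)))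
    ∧ (∀ J J' : Submodule (ringO 𝒪 𝒪₁) K,
        IsFracIdealO 𝒪 𝒪₁ J → IsFracIdealO 𝒪 𝒪₁ J' → J ≤ J' ∨ J' ≤ J) := by
  constructor
  · intro J hJ hfg
    exact part1 ht₂ ht₂irr J hJ hfg
  · intro J J' _ _
    exact totally_ordered J J'


end
end

section
/- There is no subset S ⊆ W consisting of elements of order two such that the pair (W, S) is a Coxeter system (i.e. such that W is presented by the generators S with relations (st)^{m(s,t)} = 1 for a Coxeter matrix m). In particular (W, S) is not a Coxeter group for the generating set S = {s₁, …, s_{m−1}, w₁, w₂}. -/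
noncomputable section
open IsLocalRing

variable {K : Type*} [Field K] (𝒪 : ValuationSubring K)
variable (𝒪₁ : ValuationSubring (ResidueField 𝒪))

variable {m : ℕ}

/-- The monomial matrix with permutation `σ` and entries `d i` in position `(i, σ i)`. -/
def monoMat (σ : Equiv.Perm (Fin m)) (d : Fin m → Kˣ) : Matrix (Fin m) (Fin m) K :=
  fun i j => if j = σ i then (d i : K) else 0

lemma monoMat_mul (σ τ : Equiv.Perm (Fin m)) (d e : Fin m → Kˣ) :
    monoMat σ d * monoMat τ e = monoMat (σ.trans τ) (fun i => d i * e (σ i)) := by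
  ext i j
  rw [Matrix.mul_apply, Finset.sum_eq_single (σ i)]
  · by_cases h : j = τ (σ i) <;> simp [monoMat, h, Equiv.trans_apply]
  · intro k _ hk
    simp [monoMat, hk]
  · simp

lemma monoMat_one : (monoMat 1 (fun _ => 1) : Matrix (Fin m) (Fin m) K) = 1 := by
  ext i j
  by_cases h : i = j <;> simp [monoMat, Matrix.one_apply, h, eq_comm]

lemma monoMat_conj (σ : Equiv.Perm (Fin m)) (d e : Fin m → Kˣ) :
    monoMat σ d * monoMat 1 e * monoMat σ⁻¹ (fun j => (d (σ⁻¹ j))⁻¹)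
      = monoMat 1 (fun i => e (σ i)) := by
  rw [monoMat_mul, monoMat_mul]
  ext i j
  simp only [monoMat, Equiv.trans_apply, Equiv.Perm.one_apply, Equiv.Perm.inv_def,
    Equiv.symm_apply_apply]
  by_cases h : j = i
  · simp only [h, ↓reduceIte]
    rw [mul_comm (d i) (e (σ i)), mul_assoc, mul_inv_cancel, mul_one]
  · simp only [h, ↓reduceIte]

lemma monoMat_mul_inv (σ : Equiv.Perm (Fin m)) (d : Fin m → Kˣ) :
    monoMat σ d * monoMat σ⁻¹ (fun j => (d (σ⁻¹ j))⁻¹) = 1 := by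
  rw [monoMat_mul]
  have h1 : σ.trans σ⁻¹ = (1 : Equiv.Perm (Fin m)) := by
    ext x
    simp
  have h2 : (fun i => d i * (fun j => (d (σ⁻¹ j))⁻¹) (σ i)) = fun _ => (1 : Kˣ) := by
    funext i
    simp
  rw [h1, h2, monoMat_one]

lemma monoMat_inv_mul (σ : Equiv.Perm (Fin m)) (d : Fin m → Kˣ) :
    monoMat σ⁻¹ (fun j => (d (σ⁻¹ j))⁻¹) * monoMat σ d = 1 := by
  rw [monoMat_mul]
  have h1 : (σ⁻¹ : Equiv.Perm (Fin m)).trans σ = (1 : Equiv.Perm (Fin m)) := by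
    ext x
    simp
  have h2 : (fun i => (fun j => (d (σ⁻¹ j))⁻¹) i * d (σ⁻¹ i)) = fun _ => (1 : Kˣ) := by
    funext i
    simp
  rw [h1, h2, monoMat_one]

/-- The monomial matrix `monoMat σ d` as an element of `GL(m, K)`. -/
def monoUnit (σ : Equiv.Perm (Fin m)) (d : Fin m → Kˣ) : GL (Fin m) K :=
  ⟨monoMat σ d, monoMat σ⁻¹ (fun j => (d (σ⁻¹ j))⁻¹), monoMat_mul_inv σ d, monoMat_inv_mul σ d⟩

lemma coe_inv_monoMat (g : GL (Fin m) K) (σ : Equiv.Perm (Fin m)) (d : Fin m → Kˣ)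
    (h : (g : Matrix (Fin m) (Fin m) K) = monoMat σ d) :
    ((g⁻¹ : GL (Fin m) K) : Matrix (Fin m) (Fin m) K)
      = monoMat σ⁻¹ (fun j => (d (σ⁻¹ j))⁻¹) := by
  have hr : (g : Matrix (Fin m) (Fin m) K) * monoMat σ⁻¹ (fun j => (d (σ⁻¹ j))⁻¹) = 1 := by
    rw [h]
    exact monoMat_mul_inv σ d
  calc ((g⁻¹ : GL (Fin m) K) : Matrix (Fin m) (Fin m) K)
      = ↑g⁻¹ * ((g : Matrix (Fin m) (Fin m) K) * monoMat σ⁻¹ (fun j => (d (σ⁻¹ j))⁻¹)) := by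
        rw [hr, mul_one]
    _ = (↑g⁻¹ * (g : Matrix (Fin m) (Fin m) K)) * monoMat σ⁻¹ (fun j => (d (σ⁻¹ j))⁻¹) := by
        rw [mul_assoc]
    _ = monoMat σ⁻¹ (fun j => (d (σ⁻¹ j))⁻¹) := by
        rw [← Units.val_mul, inv_mul_cancel, Units.val_one, one_mul]

/-- A matrix is monomial if it is of the form `monoMat σ d`. -/
def IsMonomial (A : Matrix (Fin m) (Fin m) K) : Prop :=
  ∃ (σ : Equiv.Perm (Fin m)) (d : Fin m → Kˣ), A = monoMat σ d

/-- The subgroup of `GL(m, K)` of monomial matrices. -/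
def monoGL (K : Type*) [Field K] (m : ℕ) : Subgroup (GL (Fin m) K) where
  carrier := {g | IsMonomial (g : Matrix (Fin m) (Fin m) K)}
  one_mem' := ⟨1, fun _ => 1, monoMat_one.symm⟩
  mul_mem' := by
    rintro a b ⟨σ, d, ha⟩ ⟨τ, e, hb⟩
    exact ⟨σ.trans τ, fun i => d i * e (σ i), by rw [Units.val_mul, ha, hb, monoMat_mul]⟩
  inv_mem' := by
    rintro a ⟨σ, d, ha⟩
    exact ⟨σ⁻¹, fun j => (d (σ⁻¹ j))⁻¹, coe_inv_monoMat a σ d ha⟩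

/-- The subgroup of scalar matrices in `GL(m, K)`. -/
def scalarGL (K : Type*) [Field K] (m : ℕ) : Subgroup (GL (Fin m) K) :=
  (Units.map (Matrix.scalar (Fin m)).toMonoidHom).range

instance : (scalarGL K m).Normal := by
  constructor
  rintro x ⟨c, rfl⟩ g
  refine ⟨c, ?_⟩
  ext1
  show Matrix.scalar (Fin m) (c : K)
      = (g : Matrix (Fin m) (Fin m) K) * (Matrix.scalar (Fin m) (c : K))
        * ((g⁻¹ : GL (Fin m) K) : Matrix (Fin m) (Fin m) K)
  rw [((Matrix.scalar_commute (c : K) (fun r => mul_comm _ r)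
      ((g : Matrix (Fin m) (Fin m) K))).eq).symm]
  rw [mul_assoc, ← Units.val_mul, mul_inv_cancel, Units.val_one, mul_one]

/-- The projective general linear group `PGL(m, K) = GL(m, K)/K^×`. -/
abbrev PGLm (K : Type*) [Field K] (m : ℕ) := GL (Fin m) K ⧸ scalarGL K m

/-- The projection `GL(m, K) → PGL(m, K)`. -/
def pgl : GL (Fin m) K →* PGLm K m := QuotientGroup.mk' (scalarGL K m)

/-- The subgroup `N` of `PGL(m, K)` of classes of monomial matrices. -/
def Npgl (K : Type*) [Field K] (m : ℕ) : Subgroup (PGLm K m) := (monoGL K m).map pgl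

/-- The subgroup of `GL(m, K)` of diagonal matrices with entries in `O^×`. -/
def diagOGL (m : ℕ) : Subgroup (GL (Fin m) K) where
  carrier := {g | ∃ d : Fin m → Kˣ,
    (∀ i, ((d i : K) ∈ ringO 𝒪 𝒪₁) ∧ (((d i)⁻¹ : Kˣ) : K) ∈ ringO 𝒪 𝒪₁) ∧
    (g : Matrix (Fin m) (Fin m) K) = monoMat 1 d}
  one_mem' := ⟨fun _ => 1, fun i => ⟨one_mem _, by rw [inv_one, Units.val_one]; exact one_mem _⟩,
    monoMat_one.symm⟩
  mul_mem' := by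
    rintro a b ⟨d, hd, ha⟩ ⟨e, he, hb⟩
    refine ⟨fun i => d i * e i, fun i => ⟨?_, ?_⟩, ?_⟩
    · rw [Units.val_mul]
      exact mul_mem (hd i).1 (he i).1
    · rw [mul_inv, Units.val_mul]
      exact mul_mem (hd i).2 (he i).2
    · rw [Units.val_mul, ha, hb, monoMat_mul]
      rfl
  inv_mem' := by
    rintro a ⟨d, hd, ha⟩
    refine ⟨fun i => (d i)⁻¹, fun i => ⟨(hd i).2, by rw [inv_inv]; exact (hd i).1⟩, ?_⟩
    have := coe_inv_monoMat a 1 d ha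
    rw [inv_one] at this
    exact this

/-- The subgroup `T` of `PGL(m, K)` of classes of diagonal matrices with entries in `O^×`. -/
def Tpgl (m : ℕ) : Subgroup (PGLm K m) := (diagOGL 𝒪 𝒪₁ m).map pgl

instance normalTN : ((Tpgl 𝒪 𝒪₁ m).subgroupOf (Npgl K m)).Normal := by
  constructor
  intro t ht g
  rw [Subgroup.mem_subgroupOf] at ht ⊢
  obtain ⟨x, hx, hxt⟩ := ht
  obtain ⟨y, hy, hyg⟩ := g.2
  obtain ⟨e, he, hxe⟩ := hx
  obtain ⟨σ, d, hyd⟩ := hy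
  refine ⟨y * x * y⁻¹, ⟨fun i => e (σ i), fun i => ⟨(he (σ i)).1, (he (σ i)).2⟩, ?_⟩, ?_⟩
  · rw [Units.val_mul, Units.val_mul, hyd, hxe, coe_inv_monoMat y σ d hyd, monoMat_conj]
  · rw [map_mul, map_mul, map_inv, hyg, hxt]
    rfl

/-- The Weyl group `W = N/T`. -/
abbrev weylW (𝒪 : ValuationSubring K) (𝒪₁ : ValuationSubring (ResidueField 𝒪)) (m : ℕ) :=
  Npgl K m ⧸ (Tpgl 𝒪 𝒪₁ m).subgroupOf (Npgl K m)

/-- The class in the Weyl group `W` of the monomial matrix `monoMat σ d`. -/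
def wOf (σ : Equiv.Perm (Fin m)) (d : Fin m → Kˣ) : weylW 𝒪 𝒪₁ m :=
  QuotientGroup.mk ⟨pgl (monoUnit σ d), ⟨monoUnit σ d, ⟨σ, d, rfl⟩, rfl⟩⟩

/-- The kernel of the addition map `(ℤ ⊕ ℤ)^m → ℤ ⊕ ℤ`. -/
def sumKer (m : ℕ) : AddSubgroup (Fin m → ℤ × ℤ) where
  carrier := {f | ∑ i, f i = 0}
  zero_mem' := by simp
  add_mem' := by
    intro a b ha hb
    have : ∑ i, (a + b) i = (∑ i, a i) + ∑ i, b i := by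
      simp [Finset.sum_add_distrib]
    simp only [Set.mem_setOf_eq] at *
    rw [this, ha, hb, add_zero]
  neg_mem' := by
    intro a ha
    simp only [Set.mem_setOf_eq] at *
    have : ∑ i, (-a) i = -∑ i, a i := by simp
    rw [this, ha, neg_zero]
namespace NotCoxAux

variable {K : Type*} [Field K] (A : ValuationSubring K)

/-- The statement that `x = u * ϖ ^ n`. -/
def Spec (ϖ : Kˣ) (x : Kˣ) (n : ℤ) (u : Aˣ) : Prop :=
  (x : K) = ((u : A) : K) * (ϖ : K) ^ n

variable [IsDiscreteValuationRing A] (ϖ : Kˣ) (hϖ : (ϖ : K) ∈ A)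

lemma unit_coe_ne_zero (u : Aˣ) : ((u : A) : K) ≠ 0 := by
  intro hc
  have : (u : A) = 0 := Subtype.ext hc
  exact (Units.ne_zero u) this

lemma exists_spec (hirr : Irreducible (⟨(ϖ : K), hϖ⟩ : A)) (x : Kˣ) :
    ∃ n : ℤ, ∃ u : Aˣ, Spec A ϖ x n u := by
  have main : ∀ y : Kˣ, (y : K) ∈ A → ∃ n : ℤ, ∃ u : Aˣ, Spec A ϖ y n u := by
    intro y hy
    have hy0 : (⟨(y : K), hy⟩ : A) ≠ 0 := by
      intro hc
      exact Units.ne_zero y (congrArg Subtype.val hc)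
    obtain ⟨n, u, hnu⟩ := IsDiscreteValuationRing.eq_unit_mul_pow_irreducible hy0 hirr
    refine ⟨(n : ℤ), u, ?_⟩
    have h2 := congrArg (Subtype.val : A → K) hnu
    push_cast at h2
    show (y : K) = ((u : A) : K) * (ϖ : K) ^ (n : ℤ)
    rw [zpow_natCast]
    exact h2
  rcases A.mem_or_inv_mem (x : K) with h | h
  · exact main x h
  · have h' : ((x⁻¹ : Kˣ) : K) ∈ A := by simpa using h
    obtain ⟨n, u, hnu⟩ := main x⁻¹ h'
    refine ⟨-n, u⁻¹, ?_⟩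
    have hx : ((x : K))⁻¹ = ((u : A) : K) * (ϖ : K) ^ n := by
      have : ((x⁻¹ : Kˣ) : K) = ((x : K))⁻¹ := by simp
      rw [← this]; exact hnu
    have hu0 : ((u : A) : K) ≠ 0 := unit_coe_ne_zero A u
    have hϖ0 : (ϖ : K) ≠ 0 := Units.ne_zero ϖ
    show (x : K) = (((u⁻¹ : Aˣ) : A) : K) * (ϖ : K) ^ (-n)
    have hxx : (x : K) = (((u : A) : K) * (ϖ : K) ^ n)⁻¹ := by
      rw [← hx, inv_inv]
    rw [hxx, mul_inv, zpow_neg]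
    congr 1
    have : ((u : A) : K) * (((u⁻¹ : Aˣ) : A) : K) = 1 := by
      have h3 : ((u : A) * ((u⁻¹ : Aˣ) : A) : A) = 1 := by
        simp
      have := congrArg (Subtype.val : A → K) h3
      push_cast at this
      exact this
    field_simp at this ⊢
    rw [mul_comm] at this
    rw [mul_comm]; exact this.symm

lemma pow_eq_unit_imp (hirr : Irreducible (⟨(ϖ : K), hϖ⟩ : A)) (k : ℕ) (w u : Aˣ)
    (h : (ϖ : K) ^ k * ((w : A) : K) = ((u : A) : K)) : k = 0 := by
  by_contra hk
  have hA : (⟨(ϖ : K), hϖ⟩ : A) ^ k * (w : A) = (u : A) := by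
    apply Subtype.ext
    push_cast
    exact h
  have hu : IsUnit ((⟨(ϖ : K), hϖ⟩ : A) ^ k) := by
    apply isUnit_of_mul_isUnit_left (y := (w : A))
    rw [hA]
    exact Units.isUnit u
  exact hirr.not_isUnit ((isUnit_pow_iff hk).mp hu)

lemma spec_unique (hirr : Irreducible (⟨(ϖ : K), hϖ⟩ : A)) {x : Kˣ} {a b : ℤ} {u w : Aˣ}
    (h1 : Spec A ϖ x a u) (h2 : Spec A ϖ x b w) : a = b ∧ u = w := by
  have hϖ0 : (ϖ : K) ≠ 0 := Units.ne_zero ϖ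
  have key : ∀ (a b : ℤ) (u w : Aˣ), a ≤ b →
      ((u : A) : K) * (ϖ : K) ^ a = ((w : A) : K) * (ϖ : K) ^ b → a = b := by
    intro a b u w hab heq
    have h3 : (ϖ : K) ^ (b - a) * ((w : A) : K) = ((u : A) : K) := by
      rw [zpow_sub₀ hϖ0, div_mul_eq_mul_div, eq_comm, eq_div_iff (zpow_ne_zero a hϖ0)]
      linear_combination heq
    have h4 : (ϖ : K) ^ ((b - a).toNat) * ((w : A) : K) = ((u : A) : K) := by
      have hcast : (((b - a).toNat : ℕ) : ℤ) = b - a := Int.toNat_of_nonneg (by omega)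
      rw [← zpow_natCast (ϖ : K), hcast]
      exact h3
    have := pow_eq_unit_imp A ϖ hϖ hirr _ _ _ h4
    omega
  unfold Spec at h1 h2
  have heq : ((u : A) : K) * (ϖ : K) ^ a = ((w : A) : K) * (ϖ : K) ^ b := by
    rw [← h1, ← h2]
  have hab : a = b := by
    rcases le_total a b with h | h
    · exact key a b u w h heq
    · exact (key b a w u h heq.symm).symm
  refine ⟨hab, ?_⟩
  subst hab
  have := mul_right_cancel₀ (zpow_ne_zero a hϖ0) heq
  exact Units.ext (Subtype.ext this)

variable (hirr : Irreducible (⟨(ϖ : K), hϖ⟩ : A))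

/-- The exponent of `ϖ` in the decomposition of `x`. -/
def nuf (x : Kˣ) : ℤ := (exists_spec A ϖ hϖ hirr x).choose

/-- The unit part in the decomposition of `x`. -/
def upf (x : Kˣ) : Aˣ := (exists_spec A ϖ hϖ hirr x).choose_spec.choose

lemma spec_nuf (x : Kˣ) : Spec A ϖ x (nuf A ϖ hϖ hirr x) (upf A ϖ hϖ hirr x) :=
  (exists_spec A ϖ hϖ hirr x).choose_spec.choose_spec

lemma nuf_eq_of {x : Kˣ} {n : ℤ} {u : Aˣ} (h : Spec A ϖ x n u) :
    nuf A ϖ hϖ hirr x = n ∧ upf A ϖ hϖ hirr x = u :=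
  spec_unique A ϖ hϖ hirr (spec_nuf A ϖ hϖ hirr x) h

lemma nuf_mul (x y : Kˣ) :
    nuf A ϖ hϖ hirr (x * y) = nuf A ϖ hϖ hirr x + nuf A ϖ hϖ hirr y ∧
    upf A ϖ hϖ hirr (x * y) = upf A ϖ hϖ hirr x * upf A ϖ hϖ hirr y := by
  apply nuf_eq_of
  have hx := spec_nuf A ϖ hϖ hirr x
  have hy := spec_nuf A ϖ hϖ hirr y
  unfold Spec at hx hy ⊢
  push_cast
  rw [zpow_add₀ (Units.ne_zero ϖ)]
  rw [hx, hy]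
  ring

lemma nuf_one : nuf A ϖ hϖ hirr 1 = 0 ∧ upf A ϖ hϖ hirr 1 = 1 := by
  apply nuf_eq_of
  unfold Spec
  simp

lemma nuf_inv (x : Kˣ) :
    nuf A ϖ hϖ hirr x⁻¹ = - nuf A ϖ hϖ hirr x ∧
    upf A ϖ hϖ hirr x⁻¹ = (upf A ϖ hϖ hirr x)⁻¹ := by
  have h := nuf_mul A ϖ hϖ hirr x x⁻¹
  rw [mul_inv_cancel] at h
  have h1 := (nuf_one A ϖ hϖ hirr).1
  have h2 := (nuf_one A ϖ hϖ hirr).2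
  rw [h1, h2] at h
  constructor
  · omega
  · exact (inv_eq_of_mul_eq_one_right h.2.symm).symm

lemma nuf_pi : nuf A ϖ hϖ hirr ϖ = 1 ∧ upf A ϖ hϖ hirr ϖ = 1 := by
  apply nuf_eq_of
  unfold Spec
  simp

lemma nuf_of_unit {x : Kˣ} (u : Aˣ) (h : (x : K) = ((u : A) : K)) :
    nuf A ϖ hϖ hirr x = 0 ∧ upf A ϖ hϖ hirr x = u := by
  apply nuf_eq_of
  unfold Spec
  simpa using h

end NotCoxAux
namespace NotCoxAux
section Level2
open IsLocalRing

variable {K : Type*} [Field K] (𝒪 : ValuationSubring K)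
  (𝒪₁ : ValuationSubring (ResidueField 𝒪))
  [IsDiscreteValuationRing 𝒪] [IsDiscreteValuationRing 𝒪₁]

/-- The map on units induced by the residue map. -/
def resU : 𝒪ˣ →* (ResidueField 𝒪)ˣ := Units.map (residue 𝒪).toMonoidHom

variable (t₂ : Kˣ) (ht₂ : (t₂ : K) ∈ 𝒪) (ht₂irr : Irreducible (⟨(t₂ : K), ht₂⟩ : 𝒪))
  (ϖ₁ : (ResidueField 𝒪)ˣ) (hϖ₁ : ((ϖ₁ : ResidueField 𝒪)) ∈ 𝒪₁)
  (hϖ₁irr : Irreducible (⟨(ϖ₁ : ResidueField 𝒪), hϖ₁⟩ : 𝒪₁))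

/-- The rank-2 valuation. -/
def vv (x : Kˣ) : ℤ × ℤ :=
  (nuf 𝒪 t₂ ht₂ ht₂irr x,
   nuf 𝒪₁ ϖ₁ hϖ₁ hϖ₁irr (resU 𝒪 (upf 𝒪 t₂ ht₂ ht₂irr x)))

lemma vv_mul (x y : Kˣ) :
    vv 𝒪 𝒪₁ t₂ ht₂ ht₂irr ϖ₁ hϖ₁ hϖ₁irr (x * y) =
    vv 𝒪 𝒪₁ t₂ ht₂ ht₂irr ϖ₁ hϖ₁ hϖ₁irr x + vv 𝒪 𝒪₁ t₂ ht₂ ht₂irr ϖ₁ hϖ₁ hϖ₁irr y := by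
  have h := nuf_mul 𝒪 t₂ ht₂ ht₂irr x y
  unfold vv
  rw [h.1, h.2, map_mul]
  have h2 := (nuf_mul 𝒪₁ ϖ₁ hϖ₁ hϖ₁irr (resU 𝒪 (upf 𝒪 t₂ ht₂ ht₂irr x))
    (resU 𝒪 (upf 𝒪 t₂ ht₂ ht₂irr y))).1
  rw [h2]
  rfl

lemma vv_one : vv 𝒪 𝒪₁ t₂ ht₂ ht₂irr ϖ₁ hϖ₁ hϖ₁irr 1 = 0 := by
  unfold vv
  rw [(nuf_one 𝒪 t₂ ht₂ ht₂irr).1, (nuf_one 𝒪 t₂ ht₂ ht₂irr).2, map_one,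
    (nuf_one 𝒪₁ ϖ₁ hϖ₁ hϖ₁irr).1]
  rfl

lemma vv_inv (x : Kˣ) :
    vv 𝒪 𝒪₁ t₂ ht₂ ht₂irr ϖ₁ hϖ₁ hϖ₁irr x⁻¹ = - vv 𝒪 𝒪₁ t₂ ht₂ ht₂irr ϖ₁ hϖ₁ hϖ₁irr x := by
  have h := vv_mul 𝒪 𝒪₁ t₂ ht₂ ht₂irr ϖ₁ hϖ₁ hϖ₁irr x x⁻¹
  rw [mul_inv_cancel, vv_one] at h
  exact eq_neg_of_add_eq_zero_right h.symm

lemma vv_t₂ : vv 𝒪 𝒪₁ t₂ ht₂ ht₂irr ϖ₁ hϖ₁ hϖ₁irr t₂ = (1, 0) := by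
  unfold vv
  rw [(nuf_pi 𝒪 t₂ ht₂ ht₂irr).1, (nuf_pi 𝒪 t₂ ht₂ ht₂irr).2, map_one,
    (nuf_one 𝒪₁ ϖ₁ hϖ₁ hϖ₁irr).1]

lemma vv_unit (x : Kˣ) (u : 𝒪ˣ) (hx : (x : K) = ((u : 𝒪) : K)) :
    vv 𝒪 𝒪₁ t₂ ht₂ ht₂irr ϖ₁ hϖ₁ hϖ₁irr x =
      (0, nuf 𝒪₁ ϖ₁ hϖ₁ hϖ₁irr (resU 𝒪 u)) := by
  have h := nuf_of_unit 𝒪 t₂ ht₂ ht₂irr u hx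
  unfold vv
  rw [h.1, h.2]

lemma mem_ringO_of_vv (x : Kˣ) (h : vv 𝒪 𝒪₁ t₂ ht₂ ht₂irr ϖ₁ hϖ₁ hϖ₁irr x = 0) :
    (x : K) ∈ ringO 𝒪 𝒪₁ := by
  unfold vv at h
  have h1 : nuf 𝒪 t₂ ht₂ ht₂irr x = 0 := congrArg Prod.fst h
  have h2 : nuf 𝒪₁ ϖ₁ hϖ₁ hϖ₁irr (resU 𝒪 (upf 𝒪 t₂ ht₂ ht₂irr x)) = 0 := congrArg Prod.snd h
  have hs := spec_nuf 𝒪 t₂ ht₂ ht₂irr x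
  unfold Spec at hs
  rw [h1, zpow_zero, mul_one] at hs
  have hs1 := spec_nuf 𝒪₁ ϖ₁ hϖ₁ hϖ₁irr (resU 𝒪 (upf 𝒪 t₂ ht₂ ht₂irr x))
  unfold Spec at hs1
  rw [h2, zpow_zero, mul_one] at hs1
  show (x : K) ∈ (𝒪₁.toSubring.comap (residue 𝒪)).map 𝒪.subtype
  rw [Subring.mem_map]
  refine ⟨((upf 𝒪 t₂ ht₂ ht₂irr x : 𝒪ˣ) : 𝒪), ?_, hs.symm⟩
  rw [Subring.mem_comap]
  have : residue 𝒪 ((upf 𝒪 t₂ ht₂ ht₂irr x : 𝒪ˣ) : 𝒪) =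
      ((resU 𝒪 (upf 𝒪 t₂ ht₂ ht₂irr x) : (ResidueField 𝒪)ˣ) : ResidueField 𝒪) := rfl
  rw [this, hs1]
  exact Subtype.mem _

lemma vv_eq_zero_of (x : Kˣ) (h1 : (x : K) ∈ ringO 𝒪 𝒪₁)
    (h2 : ((x⁻¹ : Kˣ) : K) ∈ ringO 𝒪 𝒪₁) :
    vv 𝒪 𝒪₁ t₂ ht₂ ht₂irr ϖ₁ hϖ₁ hϖ₁irr x = 0 := by
  rw [show (ringO 𝒪 𝒪₁) = (𝒪₁.toSubring.comap (residue 𝒪)).map 𝒪.subtype from rfl,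
    Subring.mem_map] at h1 h2
  obtain ⟨y, hy, hyx⟩ := h1
  obtain ⟨z, hz, hzx⟩ := h2
  rw [Subring.mem_comap] at hy hz
  have hyz : y * z = 1 := by
    apply Subtype.ext
    push_cast
    show 𝒪.subtype y * 𝒪.subtype z = 1
    rw [hyx, hzx]
    simp
  have hzy : z * y = 1 := by rw [mul_comm]; exact hyz
  set u : 𝒪ˣ := ⟨y, z, hyz, hzy⟩ with hu
  have hvv := vv_unit 𝒪 𝒪₁ t₂ ht₂ ht₂irr ϖ₁ hϖ₁ hϖ₁irr x u (by exact hyx.symm)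
  rw [hvv]
  have : nuf 𝒪₁ ϖ₁ hϖ₁ hϖ₁irr (resU 𝒪 u) = 0 := by
    have hry : residue 𝒪 y * residue 𝒪 z = 1 := by
      rw [← map_mul, hyz, map_one]
    have hrz : residue 𝒪 z * residue 𝒪 y = 1 := by rw [mul_comm]; exact hry
    set u₁ : 𝒪₁ˣ := ⟨⟨residue 𝒪 y, hy⟩, ⟨residue 𝒪 z, hz⟩,
      Subtype.ext (by push_cast; exact hry), Subtype.ext (by push_cast; exact hrz)⟩ with hu₁
    exact (nuf_of_unit 𝒪₁ ϖ₁ hϖ₁ hϖ₁irr u₁ rfl).1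
  rw [this]
  rfl

end Level2
end NotCoxAux
namespace NotCoxAux
section GrpInfra
open IsLocalRing

variable {K : Type*} [Field K]

lemma monoMat_inj {m : ℕ} {σ τ : Equiv.Perm (Fin m)} {d e : Fin m → Kˣ}
    (h : monoMat (K := K) σ d = monoMat τ e) : σ = τ ∧ d = e := by
  have hperm : σ = τ := by
    apply Equiv.ext
    intro i
    by_contra hne
    have h2 := congrFun (congrFun h i) (σ i)
    simp only [monoMat, eq_self_iff_true, if_true] at h2
    rw [if_neg hne] at h2
    exact Units.ne_zero (d i) h2
  subst hperm
  refine ⟨rfl, funext fun i => ?_⟩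
  have h2 := congrFun (congrFun h i) (σ i)
  simp only [monoMat, eq_self_iff_true, if_true] at h2
  exact Units.ext h2

variable (𝒪 : ValuationSubring K) (𝒪₁ : ValuationSubring (ResidueField 𝒪)) {m : ℕ}

/-- The permutation underlying a monomial matrix. -/
def pOf (g : ↥(monoGL K m)) : Equiv.Perm (Fin m) :=
  (g.2 : IsMonomial ((g.val : GL (Fin m) K) : Matrix (Fin m) (Fin m) K)).choose

/-- The diagonal entries of a monomial matrix. -/
def dOf (g : ↥(monoGL K m)) : Fin m → Kˣ :=
  (g.2 : IsMonomial ((g.val : GL (Fin m) K) : Matrix (Fin m) (Fin m) K)).choose_spec.choose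

lemma matOf_spec (g : ↥(monoGL K m)) :
    ((g.val : GL (Fin m) K) : Matrix (Fin m) (Fin m) K) = monoMat (pOf g) (dOf g) :=
  (g.2 : IsMonomial _).choose_spec.choose_spec

lemma matOf_unique (g : ↥(monoGL K m)) {σ : Equiv.Perm (Fin m)} {d : Fin m → Kˣ}
    (h : ((g.val : GL (Fin m) K) : Matrix (Fin m) (Fin m) K) = monoMat σ d) :
    pOf g = σ ∧ dOf g = d :=
  monoMat_inj ((matOf_spec g).symm.trans h)

lemma matOf_mul (g h : ↥(monoGL K m)) :
    pOf (g * h) = (pOf g).trans (pOf h) ∧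
      dOf (g * h) = fun i => dOf g i * dOf h (pOf g i) := by
  apply matOf_unique
  show ((g.val * h.val : GL (Fin m) K) : Matrix (Fin m) (Fin m) K) = _
  rw [Units.val_mul, matOf_spec g, matOf_spec h, monoMat_mul]

lemma matOf_one : pOf (1 : ↥(monoGL K m)) = 1 ∧ dOf (1 : ↥(monoGL K m)) = fun _ => 1 := by
  apply matOf_unique
  show ((1 : GL (Fin m) K) : Matrix (Fin m) (Fin m) K) = _
  rw [Units.val_one, monoMat_one]

/-- A monomial matrix as an element of the subgroup `monoGL`. -/
def mEl (σ : Equiv.Perm (Fin m)) (d : Fin m → Kˣ) : ↥(monoGL K m) :=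
  ⟨monoUnit σ d, σ, d, rfl⟩

lemma matOf_mEl (σ : Equiv.Perm (Fin m)) (d : Fin m → Kˣ) :
    pOf (mEl (K := K) σ d) = σ ∧ dOf (mEl (K := K) σ d) = d :=
  matOf_unique _ rfl

/-- The scalar matrix `c` as an element of `GL`. -/
def sc (c : Kˣ) : GL (Fin m) K := Units.map (Matrix.scalar (Fin m)).toMonoidHom c

lemma sc_matrix (c : Kˣ) :
    ((sc (m := m) c : GL (Fin m) K) : Matrix (Fin m) (Fin m) K) = monoMat 1 (fun _ => c) := by
  show Matrix.scalar (Fin m) (c : K) = monoMat 1 (fun _ => c)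
  ext i j
  rw [Matrix.scalar_apply, Matrix.diagonal_apply]
  simp only [monoMat, Equiv.Perm.one_apply]
  by_cases h : i = j
  · subst h; simp
  · rw [if_neg h]; exact (if_neg (fun hc : j = i => h hc.symm)).symm

lemma sc_mem_scalarGL (c : Kˣ) : sc (m := m) c ∈ scalarGL K m := ⟨c, rfl⟩

/-- The corestriction of `pgl` to `N`. -/
def qR : ↥(monoGL K m) →* ↥(Npgl K m) :=
  (pgl.comp (monoGL K m).subtype).codRestrict (Npgl K m)
    (fun g => Subgroup.mem_map.mpr ⟨g.val, g.2, rfl⟩)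

/-- The projection from monomial matrices to the Weyl group. -/
def pW : ↥(monoGL K m) →* weylW 𝒪 𝒪₁ m :=
  (QuotientGroup.mk' ((Tpgl 𝒪 𝒪₁ m).subgroupOf (Npgl K m))).comp (qR (m := m))

lemma pW_surjective : Function.Surjective (pW 𝒪 𝒪₁ (m := m)) := by
  intro w
  induction w using QuotientGroup.induction_on with
  | H n =>
    obtain ⟨x, hx⟩ := n
    obtain ⟨g, hg, hgx⟩ := hx
    refine ⟨⟨g, hg⟩, ?_⟩
    show QuotientGroup.mk _ = QuotientGroup.mk _
    congr 1
    exact Subtype.ext hgx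

lemma pW_eq_one_iff (g : ↥(monoGL K m)) :
    pW 𝒪 𝒪₁ g = 1 ↔
      ∃ t : GL (Fin m) K, t ∈ diagOGL 𝒪 𝒪₁ m ∧ ∃ c : Kˣ, t * sc c = g.val := by
  constructor
  · intro h
    have h1 : qR (m := m) g ∈ (Tpgl 𝒪 𝒪₁ m).subgroupOf (Npgl K m) :=
      (QuotientGroup.eq_one_iff _).mp h
    rw [Subgroup.mem_subgroupOf] at h1
    have h2 : pgl (g.val) ∈ Tpgl 𝒪 𝒪₁ m := h1
    obtain ⟨t, ht, htg⟩ := h2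
    have h3 : t⁻¹ * g.val ∈ scalarGL K m := by
      have := QuotientGroup.eq.mp htg
      simpa using this
    obtain ⟨c, hc⟩ := h3
    refine ⟨t, ht, c, ?_⟩
    show t * sc c = g.val
    rw [show (sc c : GL (Fin m) K) = t⁻¹ * g.val from hc, ← mul_assoc, mul_inv_cancel, one_mul]
  · intro ⟨t, ht, c, hc⟩
    apply (QuotientGroup.eq_one_iff _).mpr
    rw [Subgroup.mem_subgroupOf]
    show pgl (g.val) ∈ Tpgl 𝒪 𝒪₁ m
    refine ⟨t, ht, ?_⟩
    show QuotientGroup.mk t = QuotientGroup.mk g.val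
    apply QuotientGroup.eq.mpr
    show t⁻¹ * g.val ∈ scalarGL K m
    rw [← hc, ← mul_assoc, inv_mul_cancel, one_mul]
    exact sc_mem_scalarGL c

end GrpInfra
end NotCoxAux
namespace NotCoxAux
section Descend
open IsLocalRing

variable {K : Type*} [Field K] (𝒪 : ValuationSubring K)
  (𝒪₁ : ValuationSubring (ResidueField 𝒪)) {m : ℕ}

/-- Descend a homomorphism on monomial matrices to the Weyl group. -/
def descend {G : Type*} [Group G] (μ : ↥(monoGL K m) →* G)
    (hker : ∀ g, pW 𝒪 𝒪₁ (m := m) g = 1 → μ g = 1) : weylW 𝒪 𝒪₁ m →* G :=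
  (QuotientGroup.lift (MonoidHom.ker (pW 𝒪 𝒪₁ (m := m))) μ
    (fun g hg => hker g (by rwa [MonoidHom.mem_ker] at hg))).comp
    ((QuotientGroup.quotientKerEquivOfSurjective _
      (pW_surjective 𝒪 𝒪₁ (m := m))).symm.toMonoidHom)

lemma descend_pW {G : Type*} [Group G] (μ : ↥(monoGL K m) →* G)
    (hker : ∀ g, pW 𝒪 𝒪₁ (m := m) g = 1 → μ g = 1) (g : ↥(monoGL K m)) :
    descend 𝒪 𝒪₁ μ hker (pW 𝒪 𝒪₁ g) = μ g := by
  unfold descend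
  rw [MonoidHom.comp_apply]
  have h1 : (QuotientGroup.quotientKerEquivOfSurjective _
      (pW_surjective 𝒪 𝒪₁ (m := m))).symm (pW 𝒪 𝒪₁ g) = QuotientGroup.mk g := by
    apply (QuotientGroup.quotientKerEquivOfSurjective _
      (pW_surjective 𝒪 𝒪₁ (m := m))).injective
    rw [MulEquiv.apply_symm_apply]
    rfl
  rw [show ((QuotientGroup.quotientKerEquivOfSurjective _
      (pW_surjective 𝒪 𝒪₁ (m := m))).symm.toMonoidHom (pW 𝒪 𝒪₁ g)) = QuotientGroup.mk g from h1]
  rfl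

/-- The subgroup of units of the rank-two ring `O`. -/
def UO : Subgroup Kˣ where
  carrier := {x | (x : K) ∈ ringO 𝒪 𝒪₁ ∧ ((x⁻¹ : Kˣ) : K) ∈ ringO 𝒪 𝒪₁}
  one_mem' := by
    constructor <;> simpa using (ringO 𝒪 𝒪₁).one_mem
  mul_mem' := by
    rintro a b ⟨ha1, ha2⟩ ⟨hb1, hb2⟩
    constructor
    · rw [Units.val_mul]
      exact mul_mem ha1 hb1
    · rw [mul_inv, Units.val_mul]
      exact mul_mem ha2 hb2
  inv_mem' := by
    rintro a ⟨ha1, ha2⟩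
    exact ⟨ha2, by rw [inv_inv]; exact ha1⟩

/-- The subgroup `O^× ⬝ (K^×)^m`. -/
def HH : Subgroup Kˣ := UO 𝒪 𝒪₁ ⊔ (powMonoidHom m : Kˣ →* Kˣ).range

/-- The determinant on monomial matrices. -/
def detHom : ↥(monoGL K m) →* Kˣ :=
  (Matrix.GeneralLinearGroup.det).comp (monoGL K m).subtype

lemma detHom_diag (g : ↥(monoGL K m)) (d : Fin m → Kˣ)
    (hd : ((g.val : GL (Fin m) K) : Matrix (Fin m) (Fin m) K) = monoMat 1 d) :
    detHom g = ∏ i, d i := by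
  apply Units.ext
  rw [show (detHom g : K) = Matrix.det ((g.val : GL (Fin m) K) : Matrix (Fin m) (Fin m) K) from rfl]
  rw [hd]
  have : monoMat (K := K) 1 d = Matrix.diagonal (fun i => (d i : K)) := by
    ext i j
    rw [Matrix.diagonal_apply]
    simp only [monoMat, Equiv.Perm.one_apply]
    by_cases h : i = j
    · subst h; simp
    · rw [if_neg h]; exact if_neg (fun hc : j = i => h hc.symm)
  rw [this, Matrix.det_diagonal]
  exact (map_prod (Units.coeHom K) d Finset.univ).symm

lemma detHom_sc (c : Kˣ) : detHom (⟨sc c, 1, fun _ => c, sc_matrix c⟩ : ↥(monoGL K m)) = c ^ m := by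
  rw [detHom_diag _ (fun _ => c) (sc_matrix c)]
  rw [Finset.prod_const, Finset.card_univ, Fintype.card_fin]

lemma detHom_ker (g : ↥(monoGL K m)) (hg : pW 𝒪 𝒪₁ g = 1) :
    detHom g ∈ HH 𝒪 𝒪₁ (m := m) := by
  obtain ⟨t, ht, c, hc⟩ := (pW_eq_one_iff 𝒪 𝒪₁ g).mp hg
  obtain ⟨d, hd, hmat⟩ := ht
  have htm : t ∈ monoGL K m := ⟨1, d, hmat⟩
  have hgsplit : g = (⟨t, htm⟩ : ↥(monoGL K m)) * ⟨sc c, 1, fun _ => c, sc_matrix c⟩ :=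
    Subtype.ext hc.symm
  rw [hgsplit, map_mul]
  apply mul_mem
  · apply Subgroup.mem_sup_left
    rw [detHom_diag ⟨t, htm⟩ d hmat]
    apply Subgroup.prod_mem
    intro i _
    exact ⟨(hd i).1, (hd i).2⟩
  · apply Subgroup.mem_sup_right
    rw [detHom_sc c]
    exact ⟨c, rfl⟩

/-- The determinant map from the Weyl group to `K^× / (O^× ⬝ (K^×)^m)`. -/
def Dmap : weylW 𝒪 𝒪₁ m →* Kˣ ⧸ HH 𝒪 𝒪₁ (m := m) :=
  descend 𝒪 𝒪₁ ((QuotientGroup.mk' (HH 𝒪 𝒪₁ (m := m))).comp (detHom (m := m)))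
    (fun g hg => by
      rw [MonoidHom.comp_apply]
      exact (QuotientGroup.eq_one_iff _).mpr (detHom_ker 𝒪 𝒪₁ g hg))

lemma Dmap_pW (g : ↥(monoGL K m)) :
    Dmap 𝒪 𝒪₁ (pW 𝒪 𝒪₁ g) = QuotientGroup.mk' (HH 𝒪 𝒪₁ (m := m)) (detHom g) :=
  descend_pW 𝒪 𝒪₁ _ _ g

end Descend
end NotCoxAux
namespace NotCoxAux
section Pow
variable {K : Type*} [Field K] (A : ValuationSubring K)
variable [IsDiscreteValuationRing A] (ϖ : Kˣ) (hϖ : (ϖ : K) ∈ A)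
  (hirr : Irreducible (⟨(ϖ : K), hϖ⟩ : A))

lemma nuf_pow (x : Kˣ) (n : ℕ) :
    nuf A ϖ hϖ hirr (x ^ n) = n * nuf A ϖ hϖ hirr x := by
  induction n with
  | zero => rw [pow_zero, (nuf_one A ϖ hϖ hirr).1]; ring
  | succ n ih =>
    rw [pow_succ, (nuf_mul A ϖ hϖ hirr _ _).1, ih]
    push_cast
    ring

end Pow

section Branch3
open IsLocalRing
variable {K : Type*} [Field K] (𝒪 : ValuationSubring K)
  (𝒪₁ : ValuationSubring (ResidueField 𝒪))
  [IsDiscreteValuationRing 𝒪] [IsDiscreteValuationRing 𝒪₁] {m : ℕ}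

lemma branch_ge3 (hm : 2 < m) (t₂ : Kˣ) (ht₂ : (t₂ : K) ∈ 𝒪)
    (ht₂irr : Irreducible (⟨(t₂ : K), ht₂⟩ : 𝒪))
    (hnuU : ∀ u ∈ UO 𝒪 𝒪₁, nuf 𝒪 t₂ ht₂ ht₂irr u = 0)
    (S : Set (weylW 𝒪 𝒪₁ m)) (M : CoxeterMatrix S)
    (cs : CoxeterSystem M (weylW 𝒪 𝒪₁ m))
    (h2 : ∀ s ∈ S, orderOf s = 2) (hsimple : ∀ s : S, cs.simple s = (s : weylW 𝒪 𝒪₁ m)) :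
    False := by
  haveI : NeZero m := ⟨by omega⟩
  have hrange : Set.range cs.simple = S := by
    rw [show cs.simple = fun s : S => (s : weylW 𝒪 𝒪₁ m) from funext hsimple]
    exact Subtype.range_coe
  have hclos : Subgroup.closure S = ⊤ := by
    rw [← hrange]
    exact cs.subgroup_closure_range_simple
  -- every value of Dmap squares to one
  have hsq : ∀ w : weylW 𝒪 𝒪₁ m, (Dmap 𝒪 𝒪₁ w) ^ 2 = 1 := by
    have hle : Subgroup.closure S ≤ ((@powMonoidHom (Kˣ ⧸ HH 𝒪 𝒪₁ (m := m)) _ 2).comp (Dmap 𝒪 𝒪₁ (m := m))).ker := by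
      apply Subgroup.closure_le _ |>.mpr
      intro s hs
      have hs2 : s ^ 2 = 1 := by
        have := pow_orderOf_eq_one s
        rwa [h2 s hs] at this
      show ((@powMonoidHom (Kˣ ⧸ HH 𝒪 𝒪₁ (m := m)) _ 2).comp (Dmap 𝒪 𝒪₁ (m := m))) s = 1
      rw [MonoidHom.comp_apply, powMonoidHom_apply, ← map_pow, hs2, map_one]
    intro w
    have hw : w ∈ ((@powMonoidHom (Kˣ ⧸ HH 𝒪 𝒪₁ (m := m)) _ 2).comp (Dmap 𝒪 𝒪₁ (m := m))).ker := by
      apply hle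
      rw [hclos]
      trivial
    exact hw
  -- the element diag(t₂, 1, ..., 1)
  set dvec : Fin m → Kˣ := fun i => if i = 0 then t₂ else 1 with hdvec
  set g2 : ↥(monoGL K m) := mEl 1 dvec with hg2
  have hdet : detHom g2 = t₂ := by
    rw [detHom_diag g2 dvec rfl]
    rw [hdvec]
    simp
  have hDg : Dmap 𝒪 𝒪₁ (pW 𝒪 𝒪₁ g2) = QuotientGroup.mk' (HH 𝒪 𝒪₁ (m := m)) t₂ := by
    rw [Dmap_pW, hdet]
  have ht2sq : t₂ ^ 2 ∈ HH 𝒪 𝒪₁ (m := m) := by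
    have := hsq (pW 𝒪 𝒪₁ g2)
    rw [hDg, ← map_pow] at this
    exact (QuotientGroup.eq_one_iff _).mp this
  rw [HH, Subgroup.mem_sup] at ht2sq
  obtain ⟨u, hu, p, hp, hup⟩ := ht2sq
  obtain ⟨y, hy⟩ := hp
  have hnuf : nuf 𝒪 t₂ ht₂ ht₂irr (t₂ ^ 2) = 2 := by
    rw [nuf_pow, (nuf_pi 𝒪 t₂ ht₂ ht₂irr).1]
    ring
  have hnuf2 : nuf 𝒪 t₂ ht₂ ht₂irr (u * p) =
      0 + (m : ℤ) * nuf 𝒪 t₂ ht₂ ht₂irr y := by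
    rw [(nuf_mul 𝒪 t₂ ht₂ ht₂irr u p).1, hnuU u hu, ← hy, powMonoidHom_apply, nuf_pow]
  rw [hup, hnuf] at hnuf2
  have hmz : (2 : ℤ) < (m : ℤ) := by exact_mod_cast hm
  rcases le_or_gt (nuf 𝒪 t₂ ht₂ ht₂irr y) 0 with h | h
  · nlinarith
  · nlinarith

end Branch3
end NotCoxAux
namespace NotCoxAux
section Aff

def aff (b : Bool) (a : ℤ × ℤ) : Equiv.Perm (ℤ × ℤ) :=
  (if b then Equiv.neg _ else Equiv.refl _).trans (Equiv.addRight a)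

lemma aff_apply (b : Bool) (a z : ℤ × ℤ) : aff b a z = (if b then -z else z) + a := by
  cases b <;> simp [aff]

lemma aff_mul (b b' : Bool) (a a' : ℤ × ℤ) :
    aff b a * aff b' a' = aff (xor b b') (if b then a - a' else a' + a) := by
  apply Equiv.ext
  intro z
  rw [Equiv.Perm.mul_apply]
  cases b <;> cases b' <;> simp [aff_apply] <;> abel

lemma aff_one : aff false 0 = 1 := by
  apply Equiv.ext
  intro z
  simp [aff_apply]

lemma aff_false_eq_one_iff (a : ℤ × ℤ) : aff false a = 1 ↔ a = 0 := by
  constructor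
  · intro h
    have := congrArg (fun (e : Equiv.Perm (ℤ × ℤ)) => e 0) h
    simpa [aff_apply] using this
  · rintro rfl
    exact aff_one

lemma aff_true_ne_one (a : ℤ × ℤ) : aff true a ≠ 1 := by
  intro h
  have h1 : a = 0 := by
    have h' := congrArg (fun (e : Equiv.Perm (ℤ × ℤ)) => e 0) h
    rw [aff_apply] at h'
    simpa using h'
  have h' := congrArg (fun (e : Equiv.Perm (ℤ × ℤ)) => e (1, 0)) h
  rw [aff_apply, h1] at h'
  exact absurd h' (by decide)

lemma aff_false_pow (a : ℤ × ℤ) (n : ℕ) : (aff false a) ^ n = aff false (n • a) := by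
  induction n with
  | zero => simpa using aff_one.symm
  | succ n ih =>
    rw [pow_succ, ih, aff_mul]
    show aff false (a + n • a) = aff false ((n + 1) • a)
    congr 1
    rw [succ_nsmul]
    abel

lemma aff_true_mul (a b : ℤ × ℤ) : aff true a * aff true b = aff false (a - b) := by
  rw [aff_mul]
  rfl

lemma aff_false_mul (a b : ℤ × ℤ) : aff false a * aff false b = aff false (b + a) := by
  rw [aff_mul]
  rfl

end Aff
end NotCoxAux
namespace NotCoxAux
section Chi
open IsLocalRing
variable {K : Type*} [Field K] (𝒪 : ValuationSubring K)
  (𝒪₁ : ValuationSubring (ResidueField 𝒪))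
  [IsDiscreteValuationRing 𝒪] [IsDiscreteValuationRing 𝒪₁]
  (t₂ : Kˣ) (ht₂ : (t₂ : K) ∈ 𝒪) (ht₂irr : Irreducible (⟨(t₂ : K), ht₂⟩ : 𝒪))
  (ϖ₁ : (ResidueField 𝒪)ˣ) (hϖ₁ : ((ϖ₁ : ResidueField 𝒪)) ∈ 𝒪₁)
  (hϖ₁irr : Irreducible (⟨(ϖ₁ : ResidueField 𝒪), hϖ₁⟩ : 𝒪₁))

/-- The translation part of a monomial matrix. -/
def delta (g : ↥(monoGL K 2)) : ℤ × ℤ :=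
  vv 𝒪 𝒪₁ t₂ ht₂ ht₂irr ϖ₁ hϖ₁ hϖ₁irr (dOf g 0) -
  vv 𝒪 𝒪₁ t₂ ht₂ ht₂irr ϖ₁ hϖ₁ hϖ₁irr (dOf g 1)

lemma perm2_cases (σ : Equiv.Perm (Fin 2)) : σ = 1 ∨ σ = Equiv.swap 0 1 := by
  revert σ
  decide

lemma bOf_mul (g h : ↥(monoGL K 2)) :
    decide (pOf (g * h) ≠ 1) = xor (decide (pOf g ≠ 1)) (decide (pOf h ≠ 1)) := by
  rw [(matOf_mul g h).1]
  rcases perm2_cases (pOf g) with hg | hg <;> rcases perm2_cases (pOf h) with hh | hh <;>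
    rw [hg, hh] <;> decide

lemma delta_mul (g h : ↥(monoGL K 2)) :
    delta 𝒪 𝒪₁ t₂ ht₂ ht₂irr ϖ₁ hϖ₁ hϖ₁irr (g * h) =
      if decide (pOf g ≠ 1) then
        delta 𝒪 𝒪₁ t₂ ht₂ ht₂irr ϖ₁ hϖ₁ hϖ₁irr g - delta 𝒪 𝒪₁ t₂ ht₂ ht₂irr ϖ₁ hϖ₁ hϖ₁irr h
      else
        delta 𝒪 𝒪₁ t₂ ht₂ ht₂irr ϖ₁ hϖ₁ hϖ₁irr h + delta 𝒪 𝒪₁ t₂ ht₂ ht₂irr ϖ₁ hϖ₁ hϖ₁irr g := by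
  unfold delta
  rw [(matOf_mul g h).2]
  dsimp only
  rcases perm2_cases (pOf g) with hg | hg <;> rw [hg]
  · rw [vv_mul, vv_mul]
    have hb : decide ((1 : Equiv.Perm (Fin 2)) ≠ 1) = false := by decide
    rw [hb]
    simp only [Equiv.Perm.one_apply, Bool.false_eq_true, if_false]
    abel
  · rw [vv_mul, vv_mul]
    have hb : decide ((Equiv.swap (0 : Fin 2) 1) ≠ 1) = true := by decide
    rw [hb]
    simp only [Equiv.swap_apply_left, Equiv.swap_apply_right, if_true]
    abel

/-- The homomorphism from monomial 2×2 matrices to affine transformations of `ℤ × ℤ`. -/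
def chi0 : ↥(monoGL K 2) →* Equiv.Perm (ℤ × ℤ) where
  toFun g := aff (decide (pOf g ≠ 1)) (delta 𝒪 𝒪₁ t₂ ht₂ ht₂irr ϖ₁ hϖ₁ hϖ₁irr g)
  map_one' := by
    have h1 := matOf_one (K := K) (m := 2)
    have hδ : delta 𝒪 𝒪₁ t₂ ht₂ ht₂irr ϖ₁ hϖ₁ hϖ₁irr 1 = 0 := by
      unfold delta
      rw [h1.2]
      simp
    rw [hδ, h1.1]
    have : decide ((1 : Equiv.Perm (Fin 2)) ≠ 1) = false := by decide
    rw [this]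
    exact aff_one
  map_mul' := by
    intro g h
    rw [aff_mul, bOf_mul, delta_mul]

lemma chi0_apply (g : ↥(monoGL K 2)) :
    chi0 𝒪 𝒪₁ t₂ ht₂ ht₂irr ϖ₁ hϖ₁ hϖ₁irr g =
      aff (decide (pOf g ≠ 1)) (delta 𝒪 𝒪₁ t₂ ht₂ ht₂irr ϖ₁ hϖ₁ hϖ₁irr g) := rfl

/-- ψ₀: reduction mod 2 of the data of a monomial matrix. -/
def psi0 : ↥(monoGL K 2) →* Multiplicative (ZMod 2 × ZMod 2 × ZMod 2) where
  toFun g := Multiplicative.ofAdd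
    (((delta 𝒪 𝒪₁ t₂ ht₂ ht₂irr ϖ₁ hϖ₁ hϖ₁irr g).1 : ZMod 2),
     ((delta 𝒪 𝒪₁ t₂ ht₂ ht₂irr ϖ₁ hϖ₁ hϖ₁irr g).2 : ZMod 2),
     if decide (pOf g ≠ 1) then 1 else 0)
  map_one' := by
    have h1 := matOf_one (K := K) (m := 2)
    have hδ : delta 𝒪 𝒪₁ t₂ ht₂ ht₂irr ϖ₁ hϖ₁ hϖ₁irr 1 = 0 := by
      unfold delta
      rw [h1.2]
      simp
    rw [hδ, h1.1]
    have : decide ((1 : Equiv.Perm (Fin 2)) ≠ 1) = false := by decide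
    rw [this]
    rfl
  map_mul' := by
    intro g h
    rw [delta_mul, bOf_mul]
    rw [← ofAdd_add]
    congr 1
    have hneg : ∀ x : ZMod 2, -x = x := by decide
    have hsub : ∀ x y : ZMod 2, x - y = x + y := by decide
    cases hg : decide (pOf g ≠ 1) <;> cases hh : decide (pOf h ≠ 1) <;>
      refine Prod.ext ?_ (Prod.ext ?_ ?_) <;>
        simp only [Bool.xor_false, Bool.xor_true, Bool.false_xor, Bool.true_xor,
          Bool.not_true, Bool.not_false, if_true, if_false, Bool.false_eq_true,
          Bool.true_eq_false, toAdd_ofAdd, Prod.fst_add, Prod.snd_add, Prod.fst_sub, Prod.snd_sub,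
          Int.cast_add, Int.cast_sub, hsub, hneg] <;>
        first
          | rfl
          | ring
          | simp

lemma psi0_apply (g : ↥(monoGL K 2)) :
    psi0 𝒪 𝒪₁ t₂ ht₂ ht₂irr ϖ₁ hϖ₁ hϖ₁irr g = Multiplicative.ofAdd
      (((delta 𝒪 𝒪₁ t₂ ht₂ ht₂irr ϖ₁ hϖ₁ hϖ₁irr g).1 : ZMod 2),
       ((delta 𝒪 𝒪₁ t₂ ht₂ ht₂irr ϖ₁ hϖ₁ hϖ₁irr g).2 : ZMod 2),
       if decide (pOf g ≠ 1) then 1 else 0) := rfl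

end Chi
end NotCoxAux
namespace NotCoxAux
section Branch2
open IsLocalRing
variable {K : Type*} [Field K] (𝒪 : ValuationSubring K)
  (𝒪₁ : ValuationSubring (ResidueField 𝒪))
  [IsDiscreteValuationRing 𝒪] [IsDiscreteValuationRing 𝒪₁]
  (t₂ : Kˣ) (ht₂ : (t₂ : K) ∈ 𝒪) (ht₂irr : Irreducible (⟨(t₂ : K), ht₂⟩ : 𝒪))
  (ϖ₁ : (ResidueField 𝒪)ˣ) (hϖ₁ : ((ϖ₁ : ResidueField 𝒪)) ∈ 𝒪₁)
  (hϖ₁irr : Irreducible (⟨(ϖ₁ : ResidueField 𝒪), hϖ₁⟩ : 𝒪₁))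

lemma delta_mEl (σ : Equiv.Perm (Fin 2)) (d : Fin 2 → Kˣ) :
    delta 𝒪 𝒪₁ t₂ ht₂ ht₂irr ϖ₁ hϖ₁ hϖ₁irr (mEl σ d) =
      vv 𝒪 𝒪₁ t₂ ht₂ ht₂irr ϖ₁ hϖ₁ hϖ₁irr (d 0) -
      vv 𝒪 𝒪₁ t₂ ht₂ ht₂irr ϖ₁ hϖ₁ hϖ₁irr (d 1) := by
  unfold delta
  rw [(matOf_mEl σ d).2]

lemma ker_data (g : ↥(monoGL K 2)) (hg : pW 𝒪 𝒪₁ g = 1) :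
    pOf g = 1 ∧ delta 𝒪 𝒪₁ t₂ ht₂ ht₂irr ϖ₁ hϖ₁ hϖ₁irr g = 0 := by
  obtain ⟨t, ht, c, hc⟩ := (pW_eq_one_iff 𝒪 𝒪₁ g).mp hg
  obtain ⟨d, hd, hmat⟩ := ht
  have hmat2 : ((g.val : GL (Fin 2) K) : Matrix (Fin 2) (Fin 2) K)
      = monoMat 1 (fun i => d i * c) := by
    rw [← hc, Units.val_mul, hmat, sc_matrix, monoMat_mul]
    congr 1
  have hu := matOf_unique g hmat2
  refine ⟨hu.1, ?_⟩
  unfold delta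
  rw [hu.2]
  dsimp only
  rw [vv_mul, vv_mul,
    vv_eq_zero_of 𝒪 𝒪₁ t₂ ht₂ ht₂irr ϖ₁ hϖ₁ hϖ₁irr (d 0) (hd 0).1 (hd 0).2,
    vv_eq_zero_of 𝒪 𝒪₁ t₂ ht₂ ht₂irr ϖ₁ hϖ₁ hϖ₁irr (d 1) (hd 1).1 (hd 1).2]
  abel

lemma chi0_ker (g : ↥(monoGL K 2)) (hg : pW 𝒪 𝒪₁ g = 1) :
    chi0 𝒪 𝒪₁ t₂ ht₂ ht₂irr ϖ₁ hϖ₁ hϖ₁irr g = 1 := by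
  have h := ker_data 𝒪 𝒪₁ t₂ ht₂ ht₂irr ϖ₁ hϖ₁ hϖ₁irr g hg
  rw [chi0_apply, h.1, h.2]
  have : decide ((1 : Equiv.Perm (Fin 2)) ≠ 1) = false := by decide
  rw [this]
  exact aff_one

lemma psi0_ker (g : ↥(monoGL K 2)) (hg : pW 𝒪 𝒪₁ g = 1) :
    psi0 𝒪 𝒪₁ t₂ ht₂ ht₂irr ϖ₁ hϖ₁ hϖ₁irr g = 1 := by
  have h := ker_data 𝒪 𝒪₁ t₂ ht₂ ht₂irr ϖ₁ hϖ₁ hϖ₁irr g hg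
  rw [psi0_apply, h.1, h.2]
  have hb : decide ((1 : Equiv.Perm (Fin 2)) ≠ 1) = false := by decide
  rw [hb]
  simp

/-- The injective homomorphism from the Weyl group (m = 2) to affine
transformations of `ℤ × ℤ`. -/
def chiW : weylW 𝒪 𝒪₁ 2 →* Equiv.Perm (ℤ × ℤ) :=
  descend 𝒪 𝒪₁ (chi0 𝒪 𝒪₁ t₂ ht₂ ht₂irr ϖ₁ hϖ₁ hϖ₁irr)
    (chi0_ker 𝒪 𝒪₁ t₂ ht₂ ht₂irr ϖ₁ hϖ₁ hϖ₁irr)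

lemma chiW_pW (g : ↥(monoGL K 2)) :
    chiW 𝒪 𝒪₁ t₂ ht₂ ht₂irr ϖ₁ hϖ₁ hϖ₁irr (pW 𝒪 𝒪₁ g) =
      chi0 𝒪 𝒪₁ t₂ ht₂ ht₂irr ϖ₁ hϖ₁ hϖ₁irr g :=
  descend_pW 𝒪 𝒪₁ _ _ g

/-- The mod-2 character of the Weyl group (m = 2). -/
def psiW : weylW 𝒪 𝒪₁ 2 →* Multiplicative (ZMod 2 × ZMod 2 × ZMod 2) :=
  descend 𝒪 𝒪₁ (psi0 𝒪 𝒪₁ t₂ ht₂ ht₂irr ϖ₁ hϖ₁ hϖ₁irr)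
    (psi0_ker 𝒪 𝒪₁ t₂ ht₂ ht₂irr ϖ₁ hϖ₁ hϖ₁irr)

lemma psiW_pW (g : ↥(monoGL K 2)) :
    psiW 𝒪 𝒪₁ t₂ ht₂ ht₂irr ϖ₁ hϖ₁ hϖ₁irr (pW 𝒪 𝒪₁ g) =
      psi0 𝒪 𝒪₁ t₂ ht₂ ht₂irr ϖ₁ hϖ₁ hϖ₁irr g :=
  descend_pW 𝒪 𝒪₁ _ _ g

lemma chiW_ker (w : weylW 𝒪 𝒪₁ 2)
    (h : chiW 𝒪 𝒪₁ t₂ ht₂ ht₂irr ϖ₁ hϖ₁ hϖ₁irr w = 1) : w = 1 := by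
  obtain ⟨g, rfl⟩ := pW_surjective 𝒪 𝒪₁ w
  rw [chiW_pW] at h
  rcases perm2_cases (pOf g) with hp | hp
  case inr =>
    exfalso
    rw [chi0_apply, hp] at h
    have hb : decide (Equiv.swap (0 : Fin 2) 1 ≠ 1) = true := by decide
    rw [hb] at h
    exact aff_true_ne_one _ h
  rw [chi0_apply, hp] at h
  have hb : decide ((1 : Equiv.Perm (Fin 2)) ≠ 1) = false := by decide
  rw [hb, aff_false_eq_one_iff] at h
  have hδ : vv 𝒪 𝒪₁ t₂ ht₂ ht₂irr ϖ₁ hϖ₁ hϖ₁irr (dOf g 0) =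
      vv 𝒪 𝒪₁ t₂ ht₂ ht₂irr ϖ₁ hϖ₁ hϖ₁irr (dOf g 1) := by
    have h2 : delta 𝒪 𝒪₁ t₂ ht₂ ht₂irr ϖ₁ hϖ₁ hϖ₁irr g = 0 := h
    unfold delta at h2
    exact sub_eq_zero.mp h2
  have hvu : vv 𝒪 𝒪₁ t₂ ht₂ ht₂irr ϖ₁ hϖ₁ hϖ₁irr (dOf g 0 * (dOf g 1)⁻¹) = 0 := by
    rw [vv_mul, vv_inv, hδ]
    abel
  have hvu' : vv 𝒪 𝒪₁ t₂ ht₂ ht₂irr ϖ₁ hϖ₁ hϖ₁irr (dOf g 0 * (dOf g 1)⁻¹)⁻¹ = 0 := by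
    rw [vv_inv, hvu]
    rfl
  have hu1 := mem_ringO_of_vv 𝒪 𝒪₁ t₂ ht₂ ht₂irr ϖ₁ hϖ₁ hϖ₁irr _ hvu
  have hu2 := mem_ringO_of_vv 𝒪 𝒪₁ t₂ ht₂ ht₂irr ϖ₁ hϖ₁ hϖ₁irr _ hvu'
  apply (pW_eq_one_iff 𝒪 𝒪₁ g).mpr
  have hone1 : ((1 : Kˣ) : K) ∈ ringO 𝒪 𝒪₁ := by
    simpa using (ringO 𝒪 𝒪₁).one_mem
  have hone2 : (((1 : Kˣ)⁻¹ : Kˣ) : K) ∈ ringO 𝒪 𝒪₁ := by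
    simpa using (ringO 𝒪 𝒪₁).one_mem
  refine ⟨monoUnit 1 (fun i => if i = 0 then dOf g 0 * (dOf g 1)⁻¹ else 1),
    ⟨fun i => if i = 0 then dOf g 0 * (dOf g 1)⁻¹ else 1, ?_, rfl⟩, dOf g 1, ?_⟩
  · intro i
    dsimp only
    by_cases hi : i = 0
    · rw [if_pos hi]
      exact ⟨hu1, hu2⟩
    · rw [if_neg hi]
      exact ⟨hone1, hone2⟩
  · apply Units.ext
    show (monoMat 1 (fun i => if i = 0 then dOf g 0 * (dOf g 1)⁻¹ else 1) :
        Matrix (Fin 2) (Fin 2) K) *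
      ((sc (dOf g 1) : GL (Fin 2) K) : Matrix (Fin 2) (Fin 2) K) = _
    rw [sc_matrix, monoMat_mul, matOf_spec g, hp]
    ext i j
    simp only [monoMat, Equiv.trans_apply, Equiv.Perm.one_apply]
    by_cases hj : j = i
    · simp only [hj, eq_self_iff_true, if_true]
      have hval : (if i = 0 then dOf g 0 * (dOf g 1)⁻¹ else 1) * dOf g 1 = dOf g i := by
        by_cases hi : i = 0
        · rw [if_pos hi, hi, inv_mul_cancel_right]
        · have hi1 : i = 1 := by
            have hv : (i : ℕ) ≠ 0 := fun hc => hi (Fin.ext hc)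
            have hlt : (i : ℕ) < 2 := i.isLt
            apply Fin.ext
            show (i : ℕ) = 1
            omega
          rw [if_neg hi, one_mul, hi1]
      exact congrArg Units.val hval
    · simp only [hj, if_false]

end Branch2
end NotCoxAux
namespace NotCoxAux

lemma two_gen_contra : ∀ (x y : ZMod 2 × ZMod 2 × ZMod 2) (a b a' b' a'' b'' : ZMod 2),
    a • x + b • y = (1, 0, 0) → a' • x + b' • y = (0, 1, 0) → a'' • x + b'' • y = (0, 0, 1) →
    False := by decide

section VvT1
open IsLocalRing
variable {K : Type*} [Field K] (𝒪 : ValuationSubring K)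
  (𝒪₁ : ValuationSubring (ResidueField 𝒪))
  [IsDiscreteValuationRing 𝒪] [IsDiscreteValuationRing 𝒪₁]
  (t₂ : Kˣ) (ht₂ : (t₂ : K) ∈ 𝒪) (ht₂irr : Irreducible (⟨(t₂ : K), ht₂⟩ : 𝒪))
  (ϖ₁ : (ResidueField 𝒪)ˣ) (hϖ₁ : ((ϖ₁ : ResidueField 𝒪)) ∈ 𝒪₁)
  (hϖ₁irr : Irreducible (⟨(ϖ₁ : ResidueField 𝒪), hϖ₁⟩ : 𝒪₁))

lemma vv_t1 (t₁ : Kˣ) (ht₁ : (t₁ : K) ∈ 𝒪)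
    (hϖval : (ϖ₁ : ResidueField 𝒪) = residue 𝒪 ⟨(t₁ : K), ht₁⟩) :
    vv 𝒪 𝒪₁ t₂ ht₂ ht₂irr ϖ₁ hϖ₁ hϖ₁irr t₁ = (0, 1) := by
  have hres0 : residue 𝒪 (⟨(t₁ : K), ht₁⟩ : 𝒪) ≠ 0 := by
    rw [← hϖval]
    exact Units.ne_zero ϖ₁
  have hnm : (⟨(t₁ : K), ht₁⟩ : 𝒪) ∉ maximalIdeal 𝒪 := by
    intro hc
    exact hres0 (Ideal.Quotient.eq_zero_iff_mem.mpr hc)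
  have hUnit : IsUnit (⟨(t₁ : K), ht₁⟩ : 𝒪) := by
    by_contra hc
    exact hnm ((IsLocalRing.mem_maximalIdeal _).mpr hc)
  set u : 𝒪ˣ := hUnit.unit with hu
  have huval : ((u : 𝒪) : K) = (t₁ : K) := by
    rw [hu]
    rw [IsUnit.unit_spec]
  have h1 := nuf_of_unit 𝒪 t₂ ht₂ ht₂irr (x := t₁) u huval.symm
  unfold vv
  rw [h1.1, h1.2]
  have h2 : nuf 𝒪₁ ϖ₁ hϖ₁ hϖ₁irr (resU 𝒪 u) = 1 := by
    apply (nuf_eq_of 𝒪₁ ϖ₁ hϖ₁ hϖ₁irr (u := 1) ?_).1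
    show ((resU 𝒪 u : (ResidueField 𝒪)ˣ) : ResidueField 𝒪) = _
    have : ((resU 𝒪 u : (ResidueField 𝒪)ˣ) : ResidueField 𝒪) = residue 𝒪 (u : 𝒪) := rfl
    rw [this, hu, IsUnit.unit_spec, ← hϖval]
    simp
  rw [h2]

end VvT1
end NotCoxAux
namespace NotCoxAux
section BranchTwoMain
open IsLocalRing
variable {K : Type*} [Field K] (𝒪 : ValuationSubring K)
  (𝒪₁ : ValuationSubring (ResidueField 𝒪))
  [IsDiscreteValuationRing 𝒪] [IsDiscreteValuationRing 𝒪₁]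
  (t₂ : Kˣ) (ht₂ : (t₂ : K) ∈ 𝒪) (ht₂irr : Irreducible (⟨(t₂ : K), ht₂⟩ : 𝒪))
  (ϖ₁ : (ResidueField 𝒪)ˣ) (hϖ₁ : ((ϖ₁ : ResidueField 𝒪)) ∈ 𝒪₁)
  (hϖ₁irr : Irreducible (⟨(ϖ₁ : ResidueField 𝒪), hϖ₁⟩ : 𝒪₁))

lemma branch_eq2 (x₁ : Kˣ)
    (hx₁ : vv 𝒪 𝒪₁ t₂ ht₂ ht₂irr ϖ₁ hϖ₁ hϖ₁irr x₁ = (0, 1))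
    (S : Set (weylW 𝒪 𝒪₁ 2)) (M : CoxeterMatrix S)
    (cs : CoxeterSystem M (weylW 𝒪 𝒪₁ 2))
    (h2 : ∀ s ∈ S, orderOf s = 2)
    (hsimple : ∀ s : S, cs.simple s = (s : weylW 𝒪 𝒪₁ 2)) : False := by
  classical
  have hrange : Set.range cs.simple = S := by
    rw [show cs.simple = fun s : S => (s : weylW 𝒪 𝒪₁ 2) from funext hsimple]
    exact Subtype.range_coe
  have hclos : Subgroup.closure S = ⊤ := by
    rw [← hrange]
    exact cs.subgroup_closure_range_simple
  set χ := chiW 𝒪 𝒪₁ t₂ ht₂ ht₂irr ϖ₁ hϖ₁ hϖ₁irr with hχdef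
  set θ := psiW 𝒪 𝒪₁ t₂ ht₂ ht₂irr ϖ₁ hϖ₁ hϖ₁irr with hθdef
  have hker : ∀ w, χ w = 1 → w = 1 := chiW_ker 𝒪 𝒪₁ t₂ ht₂ ht₂irr ϖ₁ hϖ₁ hϖ₁irr
  have hinj : Function.Injective χ := (injective_iff_map_eq_one χ).mpr hker
  have hs1 : ∀ s ∈ S, s ^ 2 = 1 := by
    intro s hs
    have := pow_orderOf_eq_one s
    rwa [h2 s hs] at this
  have hsne : ∀ s ∈ S, s ≠ 1 := by
    intro s hs hc
    have := h2 s hs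
    rw [hc, orderOf_one] at this
    omega
  have hform : ∀ s ∈ S, ∃ a : ℤ × ℤ, χ s = aff true a := by
    intro s hs
    obtain ⟨g, hg⟩ := pW_surjective 𝒪 𝒪₁ s
    have hχs : χ s = aff (decide (pOf g ≠ 1))
        (delta 𝒪 𝒪₁ t₂ ht₂ ht₂irr ϖ₁ hϖ₁ hϖ₁irr g) := by
      rw [← hg, hχdef, chiW_pW, chi0_apply]
    cases hbv : decide (pOf g ≠ 1)
    case true => exact ⟨_, by rw [hχs, hbv]⟩
    case false =>
    exfalso
    have hsq : χ (s ^ 2) = 1 := by rw [hs1 s hs, map_one]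
    rw [map_pow, hχs, hbv, aff_false_pow, aff_false_eq_one_iff] at hsq
    have hδ0 : delta 𝒪 𝒪₁ t₂ ht₂ ht₂irr ϖ₁ hϖ₁ hϖ₁irr g = 0 := by
      rw [two_smul] at hsq
      have hf := congrArg Prod.fst hsq
      have hsn := congrArg Prod.snd hsq
      simp only [Prod.fst_add, Prod.snd_add, Prod.fst_zero, Prod.snd_zero] at hf hsn
      apply Prod.ext <;> simp only [Prod.fst_zero, Prod.snd_zero] <;> omega
    have hone : χ s = 1 := by
      rw [hχs, hbv, hδ0]
      exact aff_one
    exact hsne s hs (hker s hone)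
  have hMzero : ∀ i j : S, i ≠ j → M i j = 0 := by
    intro i j hij
    by_contra hM
    obtain ⟨a, hA⟩ := hform i i.2
    obtain ⟨b, hB⟩ := hform j j.2
    have hvalne : (i : weylW 𝒪 𝒪₁ 2) ≠ (j : weylW 𝒪 𝒪₁ 2) :=
      fun hc => hij (Subtype.ext hc)
    have hab : a ≠ b := by
      intro hc
      apply hvalne
      apply hinj
      rw [hA, hB, hc]
    have hpow := cs.simple_mul_simple_pow i j
    rw [hsimple i, hsimple j] at hpow
    have hχp : χ (((i : weylW 𝒪 𝒪₁ 2) * (j : weylW 𝒪 𝒪₁ 2)) ^ (M i j)) = 1 := by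
      rw [hpow, map_one]
    rw [map_pow, map_mul, hA, hB, aff_true_mul, aff_false_pow,
      aff_false_eq_one_iff] at hχp
    have hf := congrArg Prod.fst hχp
    have hsn := congrArg Prod.snd hχp
    simp only [Prod.smul_fst, Prod.smul_snd, Prod.fst_sub, Prod.snd_sub, smul_eq_mul,
      Prod.fst_zero, Prod.snd_zero, nsmul_eq_mul] at hf hsn
    have hMz : ((M i j : ℕ) : ℤ) ≠ 0 := Int.natCast_ne_zero.mpr hM
    have e1 : a.1 - b.1 = 0 := by
      rcases mul_eq_zero.mp hf with hc | hc
      · exact absurd hc hMz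
      · exact hc
    have e2 : a.2 - b.2 = 0 := by
      rcases mul_eq_zero.mp hsn with hc | hc
      · exact absurd hc hMz
      · exact hc
    exact hab (Prod.ext (by omega) (by omega))
  by_cases h3 : ∃ a ∈ S, ∃ b ∈ S, ∃ c ∈ S, a ≠ b ∧ a ≠ c ∧ b ≠ c
  · obtain ⟨a, ha, b, hb, c, hc, hab, hac, hbc⟩ := h3
    obtain ⟨x, hx⟩ := hform a ha
    obtain ⟨y, hy⟩ := hform b hb
    obtain ⟨z, hz⟩ := hform c hc
    have hrel : a * b * (a * c) = a * c * (a * b) := by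
      apply hinj
      simp only [map_mul]
      rw [hx, hy, hz, aff_true_mul, aff_true_mul, aff_false_mul, aff_false_mul]
      congr 1
      abel
    set f : S → Equiv.Perm (Fin 4) := fun s =>
      if (s : weylW 𝒪 𝒪₁ 2) = a then Equiv.swap 0 1
      else if (s : weylW 𝒪 𝒪₁ 2) = b then Equiv.swap 1 2
      else if (s : weylW 𝒪 𝒪₁ 2) = c then Equiv.swap 2 3
      else 1 with hf
    have hsq4 : ∀ s : S, f s * f s = 1 := by
      intro s
      rw [hf]
      dsimp only
      split_ifs <;> simp [Equiv.swap_mul_self]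
    have hlift : M.IsLiftable f := by
      intro i j
      by_cases hij : i = j
      · subst hij
        rw [M.diagonal, pow_one]
        exact hsq4 i
      · rw [hMzero i j hij, pow_zero]
    set F := cs.lift ⟨f, hlift⟩ with hF
    have hFs : ∀ (s : weylW 𝒪 𝒪₁ 2) (hs : s ∈ S), F s = f ⟨s, hs⟩ := by
      intro s hs
      have := cs.lift_apply_simple hlift ⟨s, hs⟩
      rwa [hsimple ⟨s, hs⟩] at this
    have hFa : F a = Equiv.swap 0 1 := by
      rw [hFs a ha, hf]
      dsimp only
      rw [if_pos rfl]
    have hFb : F b = Equiv.swap 1 2 := by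
      rw [hFs b hb, hf]
      dsimp only
      rw [if_neg (Ne.symm hab), if_pos rfl]
    have hFc : F c = Equiv.swap 2 3 := by
      rw [hFs c hc, hf]
      dsimp only
      rw [if_neg (Ne.symm hac), if_neg (Ne.symm hbc), if_pos rfl]
    have hcontr := congrArg F hrel
    simp only [map_mul, hFa, hFb, hFc] at hcontr
    exact absurd hcontr (by decide)
  · push_neg at h3
    obtain ⟨s0, t0, hsub⟩ : ∃ s0 t0 : weylW 𝒪 𝒪₁ 2, S ⊆ {s0, t0} := by
      rcases Set.eq_empty_or_nonempty S with hSe | ⟨a0, ha0⟩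
      · exact ⟨1, 1, by rw [hSe]; exact Set.empty_subset _⟩
      · by_cases hb2 : ∃ b ∈ S, b ≠ a0
        · obtain ⟨b0, hb0, hba⟩ := hb2
          refine ⟨a0, b0, fun c hcS => ?_⟩
          rcases eq_or_ne c a0 with hca | hca
          · exact Or.inl hca
          · have := h3 a0 ha0 b0 hb0 c hcS (Ne.symm hba) (Ne.symm hca)
            exact Or.inr this.symm
        · push_neg at hb2
          exact ⟨a0, a0, fun c hcS => Or.inl (hb2 c hcS)⟩
    -- three explicit elements of the Weyl group
    have hone1' : decide ((1 : Equiv.Perm (Fin 2)) ≠ 1) = false := by decide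
    have hswap' : decide ((Equiv.swap (0 : Fin 2) 1) ≠ 1) = true := by decide
    set gA : ↥(monoGL K 2) := mEl 1 (fun i => if i = 0 then t₂ else 1) with hgA
    set gB : ↥(monoGL K 2) := mEl 1 (fun i => if i = 0 then x₁ else 1) with hgB
    set gC : ↥(monoGL K 2) := mEl (Equiv.swap 0 1) (fun _ => 1) with hgC
    have hδA : delta 𝒪 𝒪₁ t₂ ht₂ ht₂irr ϖ₁ hϖ₁ hϖ₁irr gA = ((1 : ℤ), (0 : ℤ)) := by
      rw [hgA, delta_mEl]
      norm_num
      rw [vv_t₂, vv_one]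
      norm_num
    have hδB : delta 𝒪 𝒪₁ t₂ ht₂ ht₂irr ϖ₁ hϖ₁ hϖ₁irr gB = ((0 : ℤ), (1 : ℤ)) := by
      rw [hgB, delta_mEl]
      norm_num
      rw [hx₁, vv_one]
      norm_num
    have hδC : delta 𝒪 𝒪₁ t₂ ht₂ ht₂irr ϖ₁ hϖ₁ hϖ₁irr gC = ((0 : ℤ), (0 : ℤ)) := by
      rw [hgC, delta_mEl]
      norm_num
      rfl
    have hθA : θ (pW 𝒪 𝒪₁ gA) = Multiplicative.ofAdd ((1 : ZMod 2), (0 : ZMod 2), (0 : ZMod 2)) := by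
      rw [hθdef, psiW_pW, psi0_apply, hδA, (matOf_mEl _ _).1, hone1']
      norm_num
    have hθB : θ (pW 𝒪 𝒪₁ gB) = Multiplicative.ofAdd ((0 : ZMod 2), (1 : ZMod 2), (0 : ZMod 2)) := by
      rw [hθdef, psiW_pW, psi0_apply, hδB, (matOf_mEl _ _).1, hone1']
      norm_num
    have hθC : θ (pW 𝒪 𝒪₁ gC) = Multiplicative.ofAdd ((0 : ZMod 2), (0 : ZMod 2), (1 : ZMod 2)) := by
      rw [hθdef, psiW_pW, psi0_apply, hδC, (matOf_mEl _ _).1, hswap']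
      norm_num
    have hmem : ∀ w : weylW 𝒪 𝒪₁ 2, θ w ∈ Subgroup.closure {θ s0, θ t0} := by
      intro w
      have hw : w ∈ Subgroup.closure S := by rw [hclos]; trivial
      have hw2 : w ∈ Subgroup.closure ({s0, t0} : Set (weylW 𝒪 𝒪₁ 2)) :=
        Subgroup.closure_mono hsub hw
      have hmap : θ w ∈ Subgroup.map θ (Subgroup.closure ({s0, t0} : Set (weylW 𝒪 𝒪₁ 2))) :=
        Subgroup.mem_map_of_mem θ hw2
      rw [MonoidHom.map_closure, Set.image_pair] at hmap
      exact hmap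
    obtain ⟨mA, nA, hA⟩ := Subgroup.mem_closure_pair.mp (hmem (pW 𝒪 𝒪₁ gA))
    obtain ⟨mB, nB, hB⟩ := Subgroup.mem_closure_pair.mp (hmem (pW 𝒪 𝒪₁ gB))
    obtain ⟨mC, nC, hC⟩ := Subgroup.mem_closure_pair.mp (hmem (pW 𝒪 𝒪₁ gC))
    rw [hθA] at hA
    rw [hθB] at hB
    rw [hθC] at hC
    set X := Multiplicative.toAdd (θ s0) with hX
    set Y := Multiplicative.toAdd (θ t0) with hY
    have hA' : ((mA : ZMod 2)) • X + ((nA : ZMod 2)) • Y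
        = ((1 : ZMod 2), (0 : ZMod 2), (0 : ZMod 2)) := by
      rw [Int.cast_smul_eq_zsmul, Int.cast_smul_eq_zsmul, hX, hY]
      have := congrArg Multiplicative.toAdd hA
      rwa [toAdd_mul, toAdd_zpow, toAdd_zpow, toAdd_ofAdd] at this
    have hB' : ((mB : ZMod 2)) • X + ((nB : ZMod 2)) • Y
        = ((0 : ZMod 2), (1 : ZMod 2), (0 : ZMod 2)) := by
      rw [Int.cast_smul_eq_zsmul, Int.cast_smul_eq_zsmul, hX, hY]
      have := congrArg Multiplicative.toAdd hB
      rwa [toAdd_mul, toAdd_zpow, toAdd_zpow, toAdd_ofAdd] at this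
    have hC' : ((mC : ZMod 2)) • X + ((nC : ZMod 2)) • Y
        = ((0 : ZMod 2), (0 : ZMod 2), (1 : ZMod 2)) := by
      rw [Int.cast_smul_eq_zsmul, Int.cast_smul_eq_zsmul, hX, hY]
      have := congrArg Multiplicative.toAdd hC
      rwa [toAdd_mul, toAdd_zpow, toAdd_zpow, toAdd_ofAdd] at this
    exact two_gen_contra X Y _ _ _ _ _ _ hA' hB' hC'

end BranchTwoMain
end NotCoxAux
/-- There is no subset `S` of the Weyl group `W` consisting of elements of order two such
that `(W, S)` is a Coxeter system, i.e. such that `W` is presented by the generators `S`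
with the relations of a Coxeter matrix. -/
theorem weyl_group_not_coxeter
    [IsDiscreteValuationRing 𝒪] [IsAdicComplete (maximalIdeal 𝒪) 𝒪]
    [IsDiscreteValuationRing 𝒪₁] [IsAdicComplete (maximalIdeal 𝒪₁) 𝒪₁]
    (m : ℕ) (hm : 2 ≤ m) (t₁ t₂ : Kˣ)
    (ht₂ : (t₂ : K) ∈ 𝒪) (ht₂irr : Irreducible (⟨(t₂ : K), ht₂⟩ : 𝒪))
    (ht₁ : (t₁ : K) ∈ 𝒪) (ht₁mem : residue 𝒪 ⟨(t₁ : K), ht₁⟩ ∈ 𝒪₁)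
    (ht₁irr : Irreducible (⟨residue 𝒪 ⟨(t₁ : K), ht₁⟩, ht₁mem⟩ : 𝒪₁)) :
    ¬ ∃ (S : Set (weylW 𝒪 𝒪₁ m)) (M : CoxeterMatrix S)
        (cs : CoxeterSystem M (weylW 𝒪 𝒪₁ m)),
        (∀ s ∈ S, orderOf s = 2) ∧ ∀ s : S, cs.simple s = (s : weylW 𝒪 𝒪₁ m) := by
  rintro ⟨S, M, cs, h2, hsimple⟩
  have hne : residue 𝒪 (⟨(t₁ : K), ht₁⟩ : 𝒪) ≠ 0 := by
    intro hc
    exact ht₁irr.ne_zero (Subtype.ext hc)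
  set ϖ₁ : (ResidueField 𝒪)ˣ := Units.mk0 _ hne with hϖ₁def
  have hϖ₁ : ((ϖ₁ : ResidueField 𝒪)) ∈ 𝒪₁ := ht₁mem
  have hϖ₁irr : Irreducible (⟨(ϖ₁ : ResidueField 𝒪), hϖ₁⟩ : 𝒪₁) := ht₁irr
  rcases eq_or_lt_of_le hm with hm2 | hm3
  · subst hm2
    exact NotCoxAux.branch_eq2 𝒪 𝒪₁ t₂ ht₂ ht₂irr ϖ₁ hϖ₁ hϖ₁irr t₁
      (NotCoxAux.vv_t1 𝒪 𝒪₁ t₂ ht₂ ht₂irr ϖ₁ hϖ₁ hϖ₁irr t₁ ht₁ rfl) S M cs h2 hsimple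
  · exact NotCoxAux.branch_ge3 𝒪 𝒪₁ hm3 t₂ ht₂ ht₂irr
      (fun u hu => congrArg Prod.fst
        (NotCoxAux.vv_eq_zero_of 𝒪 𝒪₁ t₂ ht₂ ht₂irr ϖ₁ hϖ₁ hϖ₁irr u hu.1 hu.2))
      S M cs h2 hsimple

end
end
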